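/- arXiv:2504.14370 — 8 statements merged into one kernel-verified Lean document; each statement's English description precedes it below -/
import Mathlib

section
/- There exists a uniform index-based generation algorithm f (a function taking a countable collection X = {L_1, L_2, …} of languages and a finite sequence of strings, and returning a positive integer index) such that for every countable collection X of languages, every K ∈ X, and every enumeration E of K, writing i_t = f(X, (w_1, …, w_t)): (i) there is a finite t* such that L_{i_t} ⊆ K for all t ≥ t* (index-based generation in the limit), and (ii) the set of steps t at which L_{i_t} = K is infinite (the algorithm is accurate infinitely often). -/
/-!
Statements are formalized with strings identified with natural numbers.
A collection of candidate languages is a family `L : ℕ → Set ℕ` of infinite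
subsets of `ℕ`.  An enumeration of `K` is an injective `E : ℕ → ℕ` with range
`K`; the string produced by the adversary at step `t` is `E t`, and the finite
prefix seen by the algorithm at step `t` is `epref E t = [E 0, …, E t]`.
-/

/-- The finite prefix `[E 0, …, E t]` of the adversary's enumeration. -/
def epref (E : ℕ → ℕ) (t : ℕ) : List ℕ := (List.range (t + 1)).map E

/-- `E` is an enumeration of the language `K`. -/
def IsEnum (E : ℕ → ℕ) (K : Set ℕ) : Prop := Function.Injective E ∧ Set.range E = K

namespace KMGen

/-- Consistency of hypothesis `i` with the data seen so far. -/
def Con (L : ℕ → Set ℕ) (s : List ℕ) (i : ℕ) : Prop := ∀ x ∈ s, x ∈ L i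

-- The "chain" of hypotheses: depth 0 is the least consistent index, and each
-- deeper level is the least consistent index whose language is strictly smaller
-- than the previous level's.
open Classical in
noncomputable def ch (L : ℕ → Set ℕ) (s : List ℕ) : ℕ → Option ℕ
  | 0 => if ∃ i, Con L s i then some (sInf {i | Con L s i}) else none
  | j + 1 =>
    match ch L s j with
    | none => none
    | some c =>
      if ∃ i, Con L s i ∧ L i ⊂ L c then
        some (sInf {i | Con L s i ∧ L i ⊂ L c})
      else none

/-- Depth `j` is "qualified" at the history `s` if the chain is defined up to
depth `j` and its first `j+1` values have been unchanged during the second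
half of the history. -/
def qual (L : ℕ → Set ℕ) (s : List ℕ) (j : ℕ) : Prop :=
  (ch L s j).isSome = true ∧
    ∀ j' ≤ j, ∀ τ, (s.length - 1) / 2 ≤ τ → τ < s.length →
      ch L (s.take (τ + 1)) j' = ch L s j'

-- Greatest `m ≤ n` satisfying `P` (with a classical built-in decision).
open Classical in
noncomputable def fg (P : ℕ → Prop) : ℕ → ℕ
  | 0 => 0
  | n + 1 => if P (n + 1) then n + 1 else fg P n

/-- The generation algorithm: output the chain value at the deepest qualified
depth. -/
noncomputable def algo (L : ℕ → Set ℕ) (s : List ℕ) : ℕ :=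
  (ch L s (fg (qual L s) s.length)).getD 0

lemma fg_le_of (P : ℕ → Prop) {m n : ℕ} (hmn : m ≤ n) (hm : P m) : m ≤ fg P n := by
  classical
  induction n with
  | zero => omega
  | succ n ih =>
    rw [fg]
    by_cases h : P (n + 1)
    · rw [if_pos h]; omega
    · rw [if_neg h]
      rcases Nat.lt_or_ge m (n + 1) with h' | h'
      · exact ih (by omega)
      · obtain rfl : m = n + 1 := by omega
        exact absurd hm h

lemma fg_spec (P : ℕ → Prop) {m n : ℕ} (hmn : m ≤ n) (hm : P m) : P (fg P n) := by
  classical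
  induction n with
  | zero =>
    have hm0 : m = 0 := by omega
    subst hm0
    rw [fg]
    exact hm
  | succ n ih =>
    rw [fg]
    by_cases h : P (n + 1)
    · rw [if_pos h]; exact h
    · rw [if_neg h]
      rcases Nat.lt_or_ge m (n + 1) with h' | h'
      · exact ih (by omega)
      · obtain rfl : m = n + 1 := by omega
        exact absurd hm h

open Classical in
lemma ch_zero_eq (L : ℕ → Set ℕ) (s : List ℕ) :
    ch L s 0 = if ∃ i, Con L s i then some (sInf {i | Con L s i}) else none := by
  rw [ch]

open Classical in
lemma ch_succ_eq (L : ℕ → Set ℕ) (s : List ℕ) {j c} (h : ch L s j = some c) :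
    ch L s (j + 1) =
      if ∃ i, Con L s i ∧ L i ⊂ L c then some (sInf {i | Con L s i ∧ L i ⊂ L c})
      else none := by
  rw [ch, h]

lemma ch_succ_none (L : ℕ → Set ℕ) (s : List ℕ) {j} (h : ch L s j = none) :
    ch L s (j + 1) = none := by
  rw [ch, h]

lemma ch_succ_some (L : ℕ → Set ℕ) (s : List ℕ) {j c} (h : ch L s (j + 1) = some c) :
    ∃ e, ch L s j = some e ∧ Con L s c ∧ L c ⊂ L e := by
  classical
  cases hj : ch L s j with
  | none => rw [ch_succ_none L s hj] at h; exact absurd h (by simp)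
  | some e =>
    rw [ch_succ_eq L s hj] at h
    by_cases hex : ∃ i, Con L s i ∧ L i ⊂ L e
    · rw [if_pos hex] at h
      have hmem := Nat.sInf_mem hex
      obtain rfl : sInf {i | Con L s i ∧ L i ⊂ L e} = c := by simpa using h
      exact ⟨e, rfl, hmem.1, hmem.2⟩
    · rw [if_neg hex] at h; exact absurd h (by simp)

lemma ch_subset (L : ℕ → Set ℕ) (s : List ℕ) :
    ∀ {j j' c}, j' ≤ j → ch L s j = some c →
      ∃ c', ch L s j' = some c' ∧ L c ⊆ L c' := by
  intro j
  induction j with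
  | zero => intro j' c hj' h; interval_cases j'; exact ⟨c, h, subset_rfl⟩
  | succ j ih =>
    intro j' c hj' h
    rcases Nat.lt_or_ge j' (j + 1) with hlt | hge
    · obtain ⟨e, he, _, hss⟩ := ch_succ_some L s h
      obtain ⟨c', hc', hsub⟩ := ih (Nat.lt_succ_iff.mp hlt) he
      exact ⟨c', hc', hss.subset.trans hsub⟩
    · obtain rfl : j' = j + 1 := by omega
      exact ⟨c, h, subset_rfl⟩

lemma qual_anti (L : ℕ → Set ℕ) (s : List ℕ) {j j' : ℕ}
    (h : qual L s j) (hle : j' ≤ j) : qual L s j' := by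
  obtain ⟨h1, h2⟩ := h
  obtain ⟨c, hc⟩ := Option.isSome_iff_exists.mp h1
  obtain ⟨c', hc', _⟩ := ch_subset L s hle hc
  exact ⟨by rw [hc']; rfl, fun j'' hj'' τ hτ1 hτ2 => h2 j'' (hj''.trans hle) τ hτ1 hτ2⟩

lemma epref_length (E : ℕ → ℕ) (t : ℕ) : (epref E t).length = t + 1 := by
  simp [epref]

lemma epref_take (E : ℕ → ℕ) {τ t : ℕ} (h : τ ≤ t) :
    (epref E t).take (τ + 1) = epref E τ := by
  rw [epref, epref, ← List.map_take, List.take_range, min_eq_left (by omega)]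

lemma mem_epref_of_le (E : ℕ → ℕ) {τ t : ℕ} (h : τ ≤ t) : E τ ∈ epref E t := by
  simp only [epref, List.mem_map, List.mem_range]
  exact ⟨τ, by omega, rfl⟩

lemma epref_mem_range (E : ℕ → ℕ) {x t} (h : x ∈ epref E t) : x ∈ Set.range E := by
  simp only [epref, List.mem_map, List.mem_range] at h
  obtain ⟨a, _, rfl⟩ := h
  exact ⟨a, rfl⟩

lemma con_of_superset (L : ℕ → Set ℕ) {E : ℕ → ℕ} {z : ℕ}
    (hE : Set.range E = L z) {i : ℕ} (h : L z ⊆ L i) (t : ℕ) :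
    Con L (epref E t) i :=
  fun _ hx => h (hE ▸ epref_mem_range E hx)

lemma death (L : ℕ → Set ℕ) {E : ℕ → ℕ} {z : ℕ}
    (hE : Set.range E = L z) {i : ℕ} (h : ¬ L z ⊆ L i) :
    ∃ T, ∀ t ≥ T, ¬ Con L (epref E t) i := by
  rw [Set.not_subset] at h
  obtain ⟨x, hxz, hxi⟩ := h
  rw [← hE] at hxz
  obtain ⟨τ, rfl⟩ := hxz
  exact ⟨τ, fun t ht hcon => hxi (hcon _ (mem_epref_of_le E ht))⟩

lemma deaths (L : ℕ → Set ℕ) {E : ℕ → ℕ} {z : ℕ}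
    (hE : Set.range E = L z) (b : ℕ) :
    ∃ T, ∀ t ≥ T, ∀ i < b, ¬ L z ⊆ L i → ¬ Con L (epref E t) i := by
  induction b with
  | zero => exact ⟨0, fun t _ i hi => by omega⟩
  | succ b ih =>
    obtain ⟨T, hT⟩ := ih
    by_cases hb : L z ⊆ L b
    · exact ⟨T, fun t ht i hi hni =>
        if hib : i = b then absurd hb (hib ▸ hni) else hT t ht i (by omega) hni⟩
    · obtain ⟨Tb, hTb⟩ := death L hE hb
      refine ⟨max T Tb, fun t ht i hi hni => ?_⟩
      rcases Nat.lt_or_ge i b with h' | h'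
      · exact hT t (le_trans (le_max_left _ _) ht) i h' hni
      · obtain rfl : i = b := by omega
        exact hTb t (le_trans (le_max_right _ _) ht)

lemma descend (L : ℕ → Set ℕ) {E : ℕ → ℕ} {z : ℕ} (hE : Set.range E = L z) :
    ∀ (d : ℕ), ∀ (c k s₀ : ℕ), z - c ≤ d → L z ⊆ L c →
      (∀ i, L z ⊆ L i → L i ⊂ L c → c < i) →
      ch L (epref E s₀) k = some c →
      (∀ t ≥ s₀, ∀ j ≤ k, ch L (epref E t) j = ch L (epref E s₀) j) →
      ∃ k' s₁ c', L c' = L z ∧ ch L (epref E s₁) k' = some c' ∧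
        (∀ t ≥ s₁, ∀ j ≤ k', ch L (epref E t) j = ch L (epref E s₁) j) := by
  intro d
  induction d with
  | zero =>
    intro c k s₀ hd hsub hinv hc hst
    refine ⟨k, s₀, c, ?_, hc, hst⟩
    by_contra hne
    have hss : L z ⊂ L c := hsub.ssubset_of_ne (Ne.symm hne)
    have := hinv z subset_rfl hss
    omega
  | succ d ih =>
    intro c k s₀ hd hsub hinv hc hst
    by_cases hceq : L c = L z
    · exact ⟨k, s₀, c, hceq, hc, hst⟩
    · have hzset : z ∈ {i | L z ⊆ L i ∧ L i ⊂ L c} :=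
        ⟨subset_rfl, hsub.ssubset_of_ne (fun he => hceq he.symm)⟩
      set c' := sInf {i | L z ⊆ L i ∧ L i ⊂ L c} with hc'def
      have hc'mem : L z ⊆ L c' ∧ L c' ⊂ L c := Nat.sInf_mem ⟨z, hzset⟩
      have hcc' : c < c' := hinv c' hc'mem.1 hc'mem.2
      have hc'z : c' ≤ z := Nat.sInf_le hzset
      have hinv' : ∀ i, L z ⊆ L i → L i ⊂ L c' → c' < i := by
        intro i h1 h2
        have hle : c' ≤ i := Nat.sInf_le ⟨h1, h2.trans hc'mem.2⟩
        exact lt_of_le_of_ne hle (fun he => (he ▸ h2).false)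
      obtain ⟨T, hT⟩ := deaths L hE c'
      set s₁ := max s₀ T with hs₁def
      have key : ∀ t ≥ s₁, ch L (epref E t) (k + 1) = some c' := by
        intro t ht
        have hts₀ : s₀ ≤ t := le_trans (le_max_left _ _) ht
        have h1 : ch L (epref E t) k = some c := (hst t hts₀ k le_rfl).trans hc
        have hex : ∃ i, Con L (epref E t) i ∧ L i ⊂ L c :=
          ⟨c', con_of_superset L hE hc'mem.1 t, hc'mem.2⟩
        rw [ch_succ_eq L _ h1, if_pos hex]
        congr 1
        refine le_antisymm (Nat.sInf_le ⟨con_of_superset L hE hc'mem.1 t, hc'mem.2⟩) ?_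
        refine le_csInf ⟨c', con_of_superset L hE hc'mem.1 t, hc'mem.2⟩ ?_
        intro i hi
        by_contra hlt
        push_neg at hlt
        by_cases hKi : L z ⊆ L i
        · have : c' ≤ i := Nat.sInf_le ⟨hKi, hi.2⟩
          omega
        · exact hT t (le_trans (le_max_right _ _) ht) i hlt hKi hi.1
      have hc1 : ch L (epref E s₁) (k + 1) = some c' := key s₁ le_rfl
      have hst' : ∀ t ≥ s₁, ∀ j ≤ k + 1, ch L (epref E t) j = ch L (epref E s₁) j := by
        intro t ht j hj
        rcases Nat.lt_or_ge j (k + 1) with hlt | hge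
        · have hjk : j ≤ k := by omega
          have hts₀ : s₀ ≤ t := le_trans (le_max_left _ _) ht
          have hs₁s₀ : s₀ ≤ s₁ := le_max_left _ _
          rw [hst t hts₀ j hjk, hst s₁ hs₁s₀ j hjk]
        · obtain rfl : j = k + 1 := by omega
          rw [key t ht, hc1]
      exact ih c' (k + 1) s₁ (by omega) hc'mem.1 hinv' hc1 hst'

lemma stab (L : ℕ → Set ℕ) {E : ℕ → ℕ} {z : ℕ} (hE : Set.range E = L z) :
    ∃ k s₀ c, L c = L z ∧ ch L (epref E s₀) k = some c ∧
      (∀ t ≥ s₀, ∀ j ≤ k, ch L (epref E t) j = ch L (epref E s₀) j) := by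
  classical
  have hzmem : z ∈ {i | L z ⊆ L i} := by simp only [Set.mem_setOf_eq]; exact subset_rfl
  set c₀ := sInf {i | L z ⊆ L i} with hc₀def
  have hc₀mem : L z ⊆ L c₀ := Nat.sInf_mem ⟨z, hzmem⟩
  have hc₀z : c₀ ≤ z := Nat.sInf_le hzmem
  obtain ⟨T, hT⟩ := deaths L hE c₀
  have key : ∀ t ≥ T, ch L (epref E t) 0 = some c₀ := by
    intro t ht
    have hex : ∃ i, Con L (epref E t) i := ⟨c₀, con_of_superset L hE hc₀mem t⟩
    rw [ch_zero_eq L _, if_pos hex]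
    congr 1
    refine le_antisymm (Nat.sInf_le (con_of_superset L hE hc₀mem t)) ?_
    refine le_csInf ⟨c₀, con_of_superset L hE hc₀mem t⟩ ?_
    intro i hi
    by_contra hlt
    push_neg at hlt
    by_cases hKi : L z ⊆ L i
    · have : c₀ ≤ i := Nat.sInf_le hKi
      omega
    · exact hT t ht i hlt hKi hi
  have hinv : ∀ i, L z ⊆ L i → L i ⊂ L c₀ → c₀ < i := by
    intro i h1 h2
    have hle : c₀ ≤ i := Nat.sInf_le h1
    exact lt_of_le_of_ne hle (fun he => (he ▸ h2).false)
  have hst : ∀ t ≥ T, ∀ j ≤ 0, ch L (epref E t) j = ch L (epref E T) j := by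
    intro t ht j hj
    obtain rfl : j = 0 := by omega
    rw [key t ht, key T le_rfl]
  exact descend L hE z c₀ 0 T (Nat.sub_le _ _) hc₀mem hinv (key T le_rfl) hst

end KMGen

/-- There is a uniform index-based generation algorithm `f` (taking the
collection and the finite sequence of strings seen so far, and returning an
index) that achieves index-based generation in the limit on every instance and
is accurate (`L (i_t) = K`) at infinitely many steps. -/
theorem stmt0 :
    ∃ f : (ℕ → Set ℕ) → List ℕ → ℕ,
      ∀ (L : ℕ → Set ℕ), (∀ i, (L i).Infinite) →
        ∀ (z : ℕ) (E : ℕ → ℕ), IsEnum E (L z) →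
          (∃ tstar : ℕ, ∀ t ≥ tstar, L (f L (epref E t)) ⊆ L z) ∧
          {t : ℕ | L (f L (epref E t)) = L z}.Infinite := by
  classical
  refine ⟨KMGen.algo, ?_⟩
  intro L _ z E henum
  obtain ⟨_, hE⟩ := henum
  obtain ⟨k, s₀, cstar, hcK, hch, hstab⟩ := KMGen.stab L hE
  have hch_t : ∀ t ≥ s₀, KMGen.ch L (epref E t) k = some cstar :=
    fun t ht => (hstab t ht k le_rfl).trans hch
  set tstar := 2 * s₀ + k + 2 with htstar
  -- depth `k` is qualified at all times `t ≥ tstar`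
  have hqualk : ∀ t ≥ tstar, KMGen.qual L (epref E t) k := by
    intro t ht
    have hts₀ : s₀ ≤ t := by omega
    refine ⟨by rw [hch_t t hts₀]; rfl, ?_⟩
    intro j' hj' τ hτ1 hτ2
    rw [KMGen.epref_length] at hτ1 hτ2
    have hτt : τ ≤ t := by omega
    have hs₀τ : s₀ ≤ τ := by omega
    rw [KMGen.epref_take E hτt, hstab τ hs₀τ j' hj', hstab t hts₀ j' hj']
  -- part (i): from time `tstar` on, the output language is a subset of `L z`
  have hsub_at : ∀ t ≥ tstar, L (KMGen.algo L (epref E t)) ⊆ L z := by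
    intro t ht
    have hklen : k ≤ (epref E t).length := by rw [KMGen.epref_length]; omega
    have hkJ : k ≤ KMGen.fg (KMGen.qual L (epref E t)) (epref E t).length :=
      KMGen.fg_le_of _ hklen (hqualk t ht)
    have hqJ : KMGen.qual L (epref E t) (KMGen.fg (KMGen.qual L (epref E t)) (epref E t).length) :=
      KMGen.fg_spec _ hklen (hqualk t ht)
    obtain ⟨cJ, hcJ⟩ := Option.isSome_iff_exists.mp hqJ.1
    obtain ⟨c'', hc'', hsubJ⟩ := KMGen.ch_subset L (epref E t) hkJ hcJ
    have hc''e : c'' = cstar := Option.some.inj (hc''.symm.trans (hch_t t (by omega)))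
    rw [KMGen.algo, hcJ]
    simpa [Option.getD] using hsubJ.trans (by rw [hc''e, hcK])
  -- whenever depth `k+1` is not qualified (and `t ≥ tstar`), the output is exact
  have hexact : ∀ t, tstar ≤ t → ¬ KMGen.qual L (epref E t) (k + 1) →
      L (KMGen.algo L (epref E t)) = L z := by
    intro t ht hnq
    have hklen : k ≤ (epref E t).length := by rw [KMGen.epref_length]; omega
    have hkJ : k ≤ KMGen.fg (KMGen.qual L (epref E t)) (epref E t).length :=
      KMGen.fg_le_of _ hklen (hqualk t ht)
    have hJk : KMGen.fg (KMGen.qual L (epref E t)) (epref E t).length ≤ k := by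
      by_contra h
      push_neg at h
      have hqJ := KMGen.fg_spec (KMGen.qual L (epref E t)) hklen (hqualk t ht)
      exact hnq (KMGen.qual_anti L (epref E t) hqJ (by omega))
    have hJ : KMGen.fg (KMGen.qual L (epref E t)) (epref E t).length = k :=
      le_antisymm hJk hkJ
    rw [KMGen.algo, hJ, hch_t t (by omega)]
    simpa [Option.getD] using hcK
  -- part (ii): the output is exact at arbitrarily large times
  have key2 : ∀ N, ∃ t, N < t ∧ L (KMGen.algo L (epref E t)) = L z := by
    intro N
    by_cases hB : ∃ Nc, ∀ t ≥ Nc, KMGen.ch L (epref E t) (k + 1) = KMGen.ch L (epref E Nc) (k + 1)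
    · obtain ⟨Nc, hNc⟩ := hB
      cases hv : KMGen.ch L (epref E Nc) (k + 1) with
      | none =>
        refine ⟨max (max Nc tstar) N + 1, by omega, ?_⟩
        apply hexact _ (by omega)
        intro hq
        have h1 := hq.1
        rw [hNc _ (by omega), hv] at h1
        simp at h1
      | some v =>
        exfalso
        have hKv : L z ⊆ L v := by
          intro y hy
          rw [← hE] at hy
          obtain ⟨τ, rfl⟩ := hy
          have hvt : KMGen.ch L (epref E (max τ Nc)) (k + 1) = some v :=
            (hNc _ (le_max_right _ _)).trans hv
          obtain ⟨e, he, hcon, hss⟩ := KMGen.ch_succ_some L _ hvt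
          exact hcon _ (KMGen.mem_epref_of_le E (le_max_left _ _))
        have hvt : KMGen.ch L (epref E (max s₀ Nc)) (k + 1) = some v :=
          (hNc _ (le_max_right _ _)).trans hv
        obtain ⟨e, he, hcon, hss⟩ := KMGen.ch_succ_some L _ hvt
        have he' : e = cstar := Option.some.inj (he.symm.trans (hch_t _ (le_max_left _ _)))
        rw [he', hcK] at hss
        exact hss.not_subset hKv
    · push_neg at hB
      obtain ⟨t0, ht0, hne⟩ := hB (max (N + 1) tstar)
      have hex : ∃ u, max (N + 1) tstar ≤ u ∧
          KMGen.ch L (epref E u) (k + 1) ≠ KMGen.ch L (epref E (max (N + 1) tstar)) (k + 1) :=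
        ⟨t0, ht0, hne⟩
      set u := Nat.find hex with hu
      have huspec := Nat.find_spec hex
      have hNcu : max (N + 1) tstar < u := by
        by_contra h
        push_neg at h
        have heq : u = max (N + 1) tstar := le_antisymm h huspec.1
        exact huspec.2 (by rw [← hu, heq])
      have hprev : KMGen.ch L (epref E (u - 1)) (k + 1) =
          KMGen.ch L (epref E (max (N + 1) tstar)) (k + 1) := by
        have hmin := Nat.find_min hex (show u - 1 < u by omega)
        push_neg at hmin
        exact hmin (by omega)
      have hVne : KMGen.ch L (epref E u) (k + 1) ≠ KMGen.ch L (epref E (u - 1)) (k + 1) := by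
        rw [hprev]; exact huspec.2
      refine ⟨u, by omega, ?_⟩
      apply hexact u (by omega)
      intro hq
      have hτ1 : ((epref E u).length - 1) / 2 ≤ u - 1 := by
        rw [KMGen.epref_length]
        have := Nat.div_lt_self (show 0 < u by omega) (by norm_num : (1:ℕ) < 2)
        omega
      have hτ2 : u - 1 < (epref E u).length := by rw [KMGen.epref_length]; omega
      have h2 := hq.2 (k + 1) le_rfl (u - 1) hτ1 hτ2
      rw [KMGen.epref_take E (show u - 1 ≤ u by omega)] at h2
      exact hVne h2.symm
  have hinf : {t : ℕ | L (KMGen.algo L (epref E t)) = L z}.Infinite := by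
    apply Set.infinite_of_not_bddAbove
    rintro ⟨B, hB⟩
    obtain ⟨t, htN, hteq⟩ := key2 B
    exact absurd (hB hteq) (by omega)
  exact ⟨⟨tstar, hsub_at⟩, hinf⟩
end

section
/- Fix a countable collection X = {L_1, L_2, …} of languages and a language K ∈ X, and let z be the least index with L_z = K. For every enumeration E of K there exists a step t⁺ such that L_z is strictly critical at every step t ≥ t⁺. -/
/-- `L n` is consistent at step `t`: all strings enumerated so far belong to `L n`. -/
def ConsistentAt (L : ℕ → Set ℕ) (E : ℕ → ℕ) (n t : ℕ) : Prop := ∀ s ≤ t, E s ∈ L n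

/-- `L n` is strictly critical at step `t`: it is consistent at step `t`, and it is a
proper subset of every earlier-indexed language that is consistent at step `t`. -/
def StrictlyCriticalAt (L : ℕ → Set ℕ) (E : ℕ → ℕ) (n t : ℕ) : Prop :=
  ConsistentAt L E n t ∧ ∀ i < n, ConsistentAt L E i t → L n ⊂ L i

/-- If `z` is the least index with `L z = K`, then for every enumeration `E` of `K`
there is a step `t⁺` such that `L z` is strictly critical at every step `t ≥ t⁺`. -/
theorem stmt2 (L : ℕ → Set ℕ) (hinf : ∀ i, (L i).Infinite)
    (K : Set ℕ) (z : ℕ) (hz : L z = K) (hleast : ∀ i < z, L i ≠ K)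
    (E : ℕ → ℕ) (hE : IsEnum E K) :
    ∃ tplus : ℕ, ∀ t ≥ tplus, StrictlyCriticalAt L E z t := by
  classical
  obtain ⟨hinj, hrange⟩ := hE
  have key : ∀ i, ¬ K ⊆ L i → ∃ s, E s ∉ L i := by
    intro i h
    rw [Set.not_subset] at h
    obtain ⟨k, hk, hk'⟩ := h
    rw [← hrange] at hk
    obtain ⟨s, rfl⟩ := hk
    exact ⟨s, hk'⟩
  set f : ℕ → ℕ := fun i => if h : ¬ K ⊆ L i then (key i h).choose else 0 with hf
  refine ⟨(Finset.range z).sup f, fun t ht => ⟨?_, ?_⟩⟩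
  · intro s _
    rw [hz, ← hrange]
    exact ⟨s, rfl⟩
  · intro i hi hcons
    by_cases h : K ⊆ L i
    · rw [hz]
      refine ⟨h, fun h2 => hleast i hi (subset_antisymm h2 h)⟩
    · exfalso
      have hfi : f i ≤ t := le_trans (Finset.le_sup (Finset.mem_range.mpr hi)) ht
      have := hcons (f i) hfi
      have hspec := (key i h).choose_spec
      simp only [hf, dif_pos h] at this
      exact hspec this
end

section
/- There exists a uniform index-based generation algorithm f (a function taking a countable collection X of languages and a finite sequence of strings, and returning a positive integer index) such that for every countable collection X, every K ∈ X, and every enumeration E of K, writing i_t = f(X, (w_1, …, w_t)): (i) there is a finite t* such that L_{i_t} ⊆ K for all t ≥ t*, and (ii) limsup_{t→∞} μ_up(L_{i_t}, K) = 1. -/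
/-- The upper density of `L` in the infinite set `K`:
`limsup_{N→∞} |L ∩ {k_1,…,k_N}| / N`, where `k_1 < k_2 < ⋯` lists `K` in
increasing order (`Nat.nth (· ∈ K)` gives this listing, 0-indexed). -/
noncomputable def upperDensity (L K : Set ℕ) : ℝ :=
  Filter.limsup
    (fun N : ℕ => ((Set.ncard {n : ℕ | n < N ∧ Nat.nth (· ∈ K) n ∈ L}) : ℝ) / N)
    Filter.atTop

open Classical

/-- The set of elements enumerated up to time `t`. -/
def seen (E : ℕ → ℕ) (t : ℕ) : Set ℕ := {x | ∃ s ≤ t, E s = x}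

/-- The budget of index `a` at time `t` (number of past "passes"). -/
noncomputable def bud (L : ℕ → Set ℕ) (a : ℕ) (p : List ℕ) : ℕ → ℕ
  | 0 => 0
  | (t+1) => bud L a p t +
      (if L a ∩ Set.Iic (bud L a p t) ⊆ {x | x ∈ p.take (t+1)} then 1 else 0)

/-- Index `a` passes the plausibility test at time `t`. -/
def passes (L : ℕ → Set ℕ) (a : ℕ) (p : List ℕ) (t : ℕ) : Prop :=
  L a ∩ Set.Iic (bud L a p t) ⊆ {x | x ∈ p.take (t+1)}

/-- Index `i` is consistent with prefix `p`. -/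
def consis (L : ℕ → Set ℕ) (p : List ℕ) (i : ℕ) : Prop :=
  i ≤ p.length - 1 ∧ {x | x ∈ p} ⊆ L i

/-- Index `i` is critical for prefix `p`. -/
def crit (L : ℕ → Set ℕ) (p : List ℕ) (i : ℕ) : Prop :=
  consis L p i ∧ ∀ j, consis L p j → j ≤ i → L i ⊆ L j

/-- The algorithm. -/
noncomputable def guess (L : ℕ → Set ℕ) (p : List ℕ) : ℕ :=
  if {a | crit L p a ∧ passes L a p (p.length - 1)}.Nonempty then
    sInf {a | crit L p a ∧ passes L a p (p.length - 1)}
  else sSup {a | crit L p a}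

lemma epref_length (E : ℕ → ℕ) (t : ℕ) : (epref E t).length = t + 1 := by
  simp [epref]

lemma mem_epref {E : ℕ → ℕ} {t x : ℕ} : x ∈ epref E t ↔ ∃ s ≤ t, E s = x := by
  simp [epref, List.mem_map, List.mem_range, Nat.lt_succ_iff]

lemma epref_set (E : ℕ → ℕ) (t : ℕ) : {x | x ∈ epref E t} = seen E t := by
  ext x
  simpa [seen] using mem_epref (E := E) (t := t) (x := x)

lemma take_epref (E : ℕ → ℕ) {s t : ℕ} (h : s ≤ t) :
    (epref E t).take (s + 1) = epref E s := by
  rw [epref, epref, ← List.map_take, List.take_range]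
  congr 2
  omega

lemma bud_congr (L : ℕ → Set ℕ) (E : ℕ → ℕ) (a : ℕ) :
    ∀ (s : ℕ) {t1 t2 : ℕ}, s ≤ t1 + 1 → s ≤ t2 + 1 →
      bud L a (epref E t1) s = bud L a (epref E t2) s := by
  intro s
  induction s with
  | zero => intro t1 t2 _ _; rfl
  | succ u ih =>
    intro t1 t2 h1 h2
    have hu1 : u ≤ t1 := by omega
    have hu2 : u ≤ t2 := by omega
    simp only [bud]
    rw [ih (t1 := t1) (t2 := t2) (by omega) (by omega), take_epref E hu1, take_epref E hu2]

/-- Budget at time `t` computed from prefix at time `t`. -/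
noncomputable def BudE (L : ℕ → Set ℕ) (E : ℕ → ℕ) (a t : ℕ) : ℕ :=
  bud L a (epref E t) t

/-- Pass at time `t` computed from prefix at time `t`. -/
def PassE (L : ℕ → Set ℕ) (E : ℕ → ℕ) (a t : ℕ) : Prop :=
  passes L a (epref E t) t

lemma passE_iff (L : ℕ → Set ℕ) (E : ℕ → ℕ) (a t : ℕ) :
    PassE L E a t ↔ L a ∩ Set.Iic (BudE L E a t) ⊆ seen E t := by
  unfold PassE BudE passes
  rw [take_epref E (le_refl t), epref_set]

lemma budE_succ (L : ℕ → Set ℕ) (E : ℕ → ℕ) (a t : ℕ) :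
    BudE L E a (t+1) = BudE L E a t + (if PassE L E a t then 1 else 0) := by
  unfold BudE PassE passes
  simp only [bud]
  rw [bud_congr L E a t (t1 := t+1) (t2 := t) (by omega) (by omega),
      take_epref E (Nat.le_succ t), take_epref E (le_refl t)]

lemma budE_succ_of_pass (L : ℕ → Set ℕ) (E : ℕ → ℕ) (a t : ℕ) (h : PassE L E a t) :
    BudE L E a (t+1) = BudE L E a t + 1 := by
  rw [budE_succ]; simp [h]

lemma budE_succ_of_not_pass (L : ℕ → Set ℕ) (E : ℕ → ℕ) (a t : ℕ) (h : ¬ PassE L E a t) :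
    BudE L E a (t+1) = BudE L E a t := by
  rw [budE_succ]; simp [h]

lemma budE_mono (L : ℕ → Set ℕ) (E : ℕ → ℕ) (a : ℕ) : Monotone (BudE L E a) :=
  monotone_nat_of_le_succ fun t => by rw [budE_succ]; split <;> omega

lemma budE_const_of_no_pass (L : ℕ → Set ℕ) (E : ℕ → ℕ) (a T : ℕ)
    (h : ∀ t, T ≤ t → ¬ PassE L E a t) :
    ∀ t, T ≤ t → BudE L E a t = BudE L E a T := by
  intro t ht
  induction t, ht using Nat.le_induction with
  | base => rfl
  | succ t ht ih => rw [budE_succ_of_not_pass L E a t (h t ht), ih]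

lemma seen_sub_range (E : ℕ → ℕ) (t : ℕ) : seen E t ⊆ Set.range E := by
  rintro x ⟨s, _, hs⟩
  exact ⟨s, hs⟩

lemma good_passes_io (L : ℕ → Set ℕ) (E : ℕ → ℕ) (hInj : Function.Injective E)
    (a : ℕ) (hsub : L a ⊆ Set.range E) :
    ∀ T, ∃ t, T ≤ t ∧ PassE L E a t := by
  intro T
  by_contra hcon
  push_neg at hcon
  have hconst := budE_const_of_no_pass L E a T hcon
  set b := BudE L E a T with hb
  have hfin : (E ⁻¹' (Set.Iic b)).Finite :=
    Set.Finite.preimage (Set.injOn_of_injective hInj) (Set.finite_Iic b)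
  obtain ⟨M, hM⟩ := hfin.bddAbove
  have hTt : T ≤ max T M := le_max_left _ _
  apply hcon (max T M) hTt
  rw [passE_iff]
  rintro x ⟨hxa, hxle⟩
  rw [hconst (max T M) hTt] at hxle
  obtain ⟨s, hs⟩ := hsub hxa
  have hsM : s ≤ M := hM (show s ∈ E ⁻¹' Set.Iic b by simp [Set.mem_preimage, hs]; exact hxle)
  exact ⟨s, le_trans hsM (le_max_right _ _), hs⟩

lemma budE_unbounded (L : ℕ → Set ℕ) (E : ℕ → ℕ) (a : ℕ)
    (h : ∀ T, ∃ t, T ≤ t ∧ PassE L E a t) :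
    ∀ n, ∃ t, n ≤ BudE L E a t := by
  intro n
  induction n with
  | zero => exact ⟨0, Nat.zero_le _⟩
  | succ m ih =>
    obtain ⟨t, ht⟩ := ih
    obtain ⟨t', ht', hp⟩ := h t
    refine ⟨t' + 1, ?_⟩
    have h1 := budE_succ_of_pass L E a t' hp
    have h2 := budE_mono L E a ht'
    omega

lemma bad_passes_fo (L : ℕ → Set ℕ) (E : ℕ → ℕ) (a : ℕ) {x : ℕ}
    (hxa : x ∈ L a) (hx : x ∉ Set.range E) :
    ∃ T, ∀ t, T ≤ t → ¬ PassE L E a t := by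
  by_contra hcon
  push_neg at hcon
  have hio : ∀ T, ∃ t, T ≤ t ∧ PassE L E a t := by
    intro T
    obtain ⟨t, ht, hp⟩ := hcon T
    exact ⟨t, ht, hp⟩
  obtain ⟨t0, ht0⟩ := budE_unbounded L E a hio x
  obtain ⟨t, htt, hp⟩ := hio t0
  rw [passE_iff] at hp
  have hxb : x ≤ BudE L E a t := le_trans ht0 (budE_mono L E a htt)
  exact hx (seen_sub_range E t (hp ⟨hxa, hxb⟩))

lemma consis_iff (L : ℕ → Set ℕ) (E : ℕ → ℕ) (t i : ℕ) :
    consis L (epref E t) i ↔ i ≤ t ∧ seen E t ⊆ L i := by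
  unfold consis
  rw [epref_length, epref_set]
  simp

lemma density_term_nonneg (Lx K : Set ℕ) (N : ℕ) :
    0 ≤ ((Set.ncard {n : ℕ | n < N ∧ Nat.nth (· ∈ K) n ∈ Lx}) : ℝ) / N :=
  div_nonneg (Nat.cast_nonneg _) (Nat.cast_nonneg _)

lemma density_term_le_one (Lx K : Set ℕ) (N : ℕ) :
    ((Set.ncard {n : ℕ | n < N ∧ Nat.nth (· ∈ K) n ∈ Lx}) : ℝ) / N ≤ 1 := by
  rcases Nat.eq_zero_or_pos N with h | h
  · subst h; simp
  · rw [div_le_one (by exact_mod_cast h)]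
    have hsub : {n : ℕ | n < N ∧ Nat.nth (· ∈ K) n ∈ Lx} ⊆ Set.Iio N :=
      fun n hn => hn.1
    have h1 : Set.ncard {n : ℕ | n < N ∧ Nat.nth (· ∈ K) n ∈ Lx} ≤ N := by
      calc Set.ncard {n : ℕ | n < N ∧ Nat.nth (· ∈ K) n ∈ Lx}
          ≤ Set.ncard (Set.Iio N) := Set.ncard_le_ncard hsub (Set.finite_Iio N)
        _ = N := by rw [← Finset.coe_Iio, Set.ncard_coe_finset, Nat.card_Iio]
    exact_mod_cast h1

lemma cobdd_of_nonneg {u : ℕ → ℝ} (h : ∀ n, 0 ≤ u n) :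
    Filter.IsCoboundedUnder (· ≤ ·) Filter.atTop u := by
  refine ⟨0, fun a ha => ?_⟩
  rw [Filter.eventually_map] at ha
  obtain ⟨n, hn⟩ := ha.exists
  exact le_trans (h n) hn

lemma upperDensity_le_one (Lx K : Set ℕ) : upperDensity Lx K ≤ 1 := by
  apply Filter.limsup_le_of_le (cobdd_of_nonneg (density_term_nonneg Lx K))
  exact Filter.Eventually.of_forall (density_term_le_one Lx K)

lemma upperDensity_self {K : Set ℕ} (hK : K.Infinite) : upperDensity K K = 1 := by
  unfold upperDensity
  have hev : ∀ᶠ N : ℕ in Filter.atTop,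
      ((Set.ncard {n : ℕ | n < N ∧ Nat.nth (· ∈ K) n ∈ K}) : ℝ) / N = 1 := by
    filter_upwards [Filter.eventually_ge_atTop 1] with N hN
    have hset : {n : ℕ | n < N ∧ Nat.nth (· ∈ K) n ∈ K} = Set.Iio N := by
      ext n
      simp only [Set.mem_setOf_eq, Set.mem_Iio, and_iff_left_iff_imp]
      intro _
      exact Nat.nth_mem_of_infinite (by simpa using hK) n
    rw [hset, ← Finset.coe_Iio, Set.ncard_coe_finset, Nat.card_Iio]
    rw [div_self (by exact_mod_cast (by omega : N ≠ 0) : (N:ℝ) ≠ 0)]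
  rw [Filter.limsup_congr hev, Filter.limsup_const]

/-- There is a uniform index-based generation algorithm achieving index-based
generation in the limit on every instance, whose guessed languages `L (i_t)` satisfy
`limsup_{t→∞} μ_up(L (i_t), K) = 1`. -/
theorem stmt3 :
    ∃ f : (ℕ → Set ℕ) → List ℕ → ℕ,
      ∀ (L : ℕ → Set ℕ), (∀ i, (L i).Infinite) →
        ∀ (z : ℕ) (E : ℕ → ℕ), IsEnum E (L z) →
          (∃ tstar : ℕ, ∀ t ≥ tstar, L (f L (epref E t)) ⊆ L z) ∧
          Filter.limsup (fun t : ℕ => upperDensity (L (f L (epref E t))) (L z))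
            Filter.atTop = 1 := by
  refine ⟨guess, ?_⟩
  intro L hL z E hE
  obtain ⟨hInj, hK⟩ := hE
  have hseen : ∀ t, seen E t ⊆ L z := fun t => hK ▸ seen_sub_range E t
  have hzcons : ∀ t, z ≤ t → consis L (epref E t) z := fun t ht =>
    (consis_iff L E t z).mpr ⟨ht, hseen t⟩
  have helim : ∀ j, ¬ (L z ⊆ L j) → ∃ T, ∀ t, T ≤ t → ¬ seen E t ⊆ L j := by
    intro j hj
    rw [Set.not_subset] at hj
    obtain ⟨k, hkK, hkj⟩ := hj
    rw [← hK] at hkK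
    obtain ⟨s, hs⟩ := hkK
    exact ⟨s, fun t ht hsub => hkj (hsub ⟨s, ht, hs⟩)⟩
  choose Te hTe using helim
  set T0 : ℕ := max z ((Finset.range z).sup fun j => if h : L z ⊆ L j then 0 else Te j h)
    with hT0def
  have hT0z : z ≤ T0 := le_max_left _ _
  have hcritz : ∀ t, T0 ≤ t → crit L (epref E t) z := by
    intro t ht
    refine ⟨hzcons t (le_trans hT0z ht), ?_⟩
    intro j hj hjz
    rcases eq_or_lt_of_le hjz with rfl | hlt
    · exact subset_rfl
    · by_cases hsub : L z ⊆ L j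
      · exact hsub
      · exfalso
        have hjmem : j ∈ Finset.range z := Finset.mem_range.mpr hlt
        have h1 : Te j hsub ≤ (Finset.range z).sup
            (fun j => if h : L z ⊆ L j then 0 else Te j h) := by
          simpa only [dif_neg hsub] using
            Finset.le_sup (f := fun j => if h : L z ⊆ L j then 0 else Te j h) hjmem
        have h2 : Te j hsub ≤ t := le_trans (le_trans h1 (le_max_right _ _)) ht
        exact hTe j hsub t h2 ((consis_iff L E t j).mp hj).2
  have hcrit_safe : ∀ t, T0 ≤ t → ∀ a, crit L (epref E t) a → z ≤ a → L a ⊆ L z :=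
    fun t ht a ha hza => ha.2 z (hzcons t (le_trans hT0z ht)) hza
  have hbad : ∀ a, ¬ (L a ⊆ L z) → ∃ T, ∀ t, T ≤ t → ¬ PassE L E a t := by
    intro a hsub
    rw [Set.not_subset] at hsub
    obtain ⟨x, hxa, hxz⟩ := hsub
    exact bad_passes_fo L E a hxa (by rwa [hK])
  choose Tb hTb using hbad
  set T1 : ℕ := (Finset.range z).sup fun a => if h : L a ⊆ L z then 0 else Tb a h
    with hT1def
  have hT1 : ∀ a, a < z → ∀ t, T1 ≤ t → PassE L E a t → L a ⊆ L z := by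
    intro a haz t ht hp
    by_contra hsub
    have h1 : Tb a hsub ≤ T1 := by
      rw [hT1def]
      simpa only [dif_neg hsub] using
        Finset.le_sup (f := fun a => if h : L a ⊆ L z then 0 else Tb a h)
          (Finset.mem_range.mpr haz)
    exact hTb a hsub t (le_trans h1 ht) hp
  have hguess : ∀ t, guess L (epref E t) =
      if ({a | crit L (epref E t) a ∧ PassE L E a t}).Nonempty then
        sInf {a | crit L (epref E t) a ∧ PassE L E a t}
      else sSup {a | crit L (epref E t) a} := by
    intro t
    unfold guess
    simp only [epref_length, Nat.add_sub_cancel]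
    rfl
  set tstar := max T0 T1 with htstar
  have hsafe : ∀ t, tstar ≤ t → L (guess L (epref E t)) ⊆ L z := by
    intro t ht
    have hT0t : T0 ≤ t := le_trans (le_max_left _ _) ht
    have hT1t : T1 ≤ t := le_trans (le_max_right _ _) ht
    rw [hguess t]
    split_ifs with hne
    · have hmem := Nat.sInf_mem hne
      rcases lt_or_ge (sInf {a | crit L (epref E t) a ∧ PassE L E a t}) z with hlt | hge
      · exact hT1 _ hlt t hT1t hmem.2
      · exact hcrit_safe t hT0t _ hmem.1 hge
    · have hzc : z ∈ {a | crit L (epref E t) a} := hcritz t hT0t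
      have hbdd : BddAbove {a | crit L (epref E t) a} :=
        ⟨t, fun a ha => ((consis_iff L E t a).mp ha.1).1⟩
      have hmem := Nat.sSup_mem ⟨z, hzc⟩ hbdd
      have hge : z ≤ sSup {a | crit L (epref E t) a} := le_csSup hbdd hzc
      exact hcrit_safe t hT0t _ hmem hge
  have hfreq : ∀ T, ∃ t, T ≤ t ∧ L (guess L (epref E t)) = L z := by
    intro T
    obtain ⟨t, ht, hp⟩ := good_passes_io L E hInj z
      (by rw [hK]) (max T tstar)
    have hTt : T ≤ t := le_trans (le_max_left _ _) ht
    have hts : tstar ≤ t := le_trans (le_max_right _ _) ht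
    have hT0t : T0 ≤ t := le_trans (le_max_left _ _) hts
    have hzmem : z ∈ {a | crit L (epref E t) a ∧ PassE L E a t} := ⟨hcritz t hT0t, hp⟩
    have hne : ({a | crit L (epref E t) a ∧ PassE L E a t}).Nonempty := ⟨z, hzmem⟩
    have hmem := Nat.sInf_mem hne
    have hle : sInf {a | crit L (epref E t) a ∧ PassE L E a t} ≤ z := Nat.sInf_le hzmem
    refine ⟨t, hTt, Set.Subset.antisymm (hsafe t hts) ?_⟩
    rw [hguess t, if_pos hne]
    exact (hcritz t hT0t).2 _ hmem.1.1 hle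
  refine ⟨⟨tstar, hsafe⟩, ?_⟩
  have hub : ∀ t, upperDensity (L (guess L (epref E t))) (L z) ≤ 1 :=
    fun t => upperDensity_le_one _ _
  have hfr : ∃ᶠ t in Filter.atTop,
      (1:ℝ) ≤ upperDensity (L (guess L (epref E t))) (L z) := by
    rw [Filter.frequently_atTop]
    intro T
    obtain ⟨t, hTt, heq⟩ := hfreq T
    exact ⟨t, hTt, by rw [heq, upperDensity_self (hL z)]⟩
  apply le_antisymm
  · apply Filter.limsup_le_of_le ?_ (Filter.Eventually.of_forall hub)
    refine ⟨1, fun a ha => ?_⟩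
    rw [Filter.eventually_map] at ha
    obtain ⟨t, ht1, ht2⟩ := (hfr.and_eventually ha).exists
    exact le_trans ht1 ht2
  · exact Filter.le_limsup_of_frequently_le hfr
      ⟨1, by rw [Filter.eventually_map]; exact Filter.Eventually.of_forall hub⟩
end

section
/- Let X be a countable collection of languages and K ∈ X. Suppose that for every ε > 0 there exists an infinite perfect tower of languages from X with terminal language K in which every language has upper density at most ε in K. Then for every index-based generation algorithm f that guarantees validity for X and every ε > 0, there exists an enumeration E of K such that μ_up(L_{i_t}, K) ≤ ε for infinitely many steps t, where i_t = f(w_1, …, w_t). -/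
/-- The sets `B_k` associated with a sequence of languages:
`B_0 = ⋂_i Λ i` and `B_k = (⋂_{i ≥ k} Λ i) \ (B_0 ∪ ⋯ ∪ B_{k-1})`. -/
def towerB (Λ : ℕ → Set ℕ) : ℕ → Set ℕ
  | k => {w | ∀ i, k ≤ i → w ∈ Λ i} \ {w | ∃ m, ∃ _ : m < k, w ∈ towerB Λ m}

/-- `(Λ 0, Λ 1, …)` is an infinite perfect tower of (pairwise distinct, infinite)
languages with terminal language `K`. -/
structure IsPerfectTower (Λ : ℕ → Set ℕ) (K : Set ℕ) : Prop where
  injective : Function.Injective Λ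
  infinite : ∀ j, (Λ j).Infinite
  proper : ∀ j, Λ j ⊂ K
  nonempty : ∀ j, (towerB Λ j).Nonempty
  complete : (⋃ j, towerB Λ j) = K

/-- The index-based generation algorithm `f` guarantees validity for the collection
`L`: on any enumeration of any member of the collection, its guesses are eventually
always subsets of the enumerated language. -/
def GuaranteesValidity (L : ℕ → Set ℕ) (f : List ℕ → ℕ) : Prop :=
  ∀ (i : ℕ) (E : ℕ → ℕ), IsEnum E (L i) →
    ∃ t0 : ℕ, ∀ t ≥ t0, L (f (epref E t)) ⊆ L i

/-!
Every element of `K` lies in all but finitely many languages of the tower, so every finite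
injective list in `K` lies in a single tower language `Λ j = L i`. Running the algorithm on an
enumeration of `L i` that starts with this list, validity eventually confines its guesses to
`Λ j`, whose upper density in `K` is at most `ε`. Keeping the enumeration up to such a step,
appending the next element of `K` and repeating, the prefixes converge to an enumeration of `K`
on which the algorithm makes a guess of density at most `ε` in every round.
-/

open Filter

lemma upperDensity_mono {A B : Set ℕ} (K : Set ℕ) (h : A ⊆ B) :
    upperDensity A K ≤ upperDensity B K := by
  have hcount : ∀ (C : Set ℕ) (N : ℕ),
      {n : ℕ | n < N ∧ Nat.nth (· ∈ K) n ∈ C} ⊆ Set.Iio N := fun _ _ _ hn => hn.1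
  have hle_one : ∀ (C : Set ℕ) (N : ℕ),
      ((Set.ncard {n : ℕ | n < N ∧ Nat.nth (· ∈ K) n ∈ C}) : ℝ) / N ≤ 1 := by
    intro C N
    refine div_le_one_of_le₀ ?_ N.cast_nonneg
    have := Set.ncard_le_ncard (hcount C N) (Set.finite_Iio N)
    rw [Set.ncard_Iio_nat] at this
    exact_mod_cast this
  refine limsup_le_limsup (Eventually.of_forall fun N => ?_)
    (isCoboundedUnder_le_of_le atTop fun N => by positivity)
    (isBoundedUnder_of ⟨1, hle_one B⟩)
  dsimp only
  gcongr ?_ / _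
  have hAB : {n : ℕ | n < N ∧ Nat.nth (· ∈ K) n ∈ A} ⊆ {n | n < N ∧ Nat.nth (· ∈ K) n ∈ B} :=
    fun n hn => ⟨hn.1, h hn.2⟩
  exact_mod_cast Set.ncard_le_ncard hAB ((Set.finite_Iio N).subset (hcount B N))

lemma List.map_range_prefix {α : Type*} (E : ℕ → α) {m n : ℕ} (h : m ≤ n) :
    (List.range m).map E <+: (List.range n).map E := by
  rw [List.prefix_iff_eq_take, List.length_map, List.length_range, ← List.map_take,
    List.take_range, min_eq_left h]

lemma List.IsPrefix.map_range_length_eq {α : Type*} {E : ℕ → α} {q : List α} {n : ℕ}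
    (h : q <+: (List.range n).map E) : (List.range q.length).map E = q := by
  rw [List.prefix_iff_eq_take, ← List.map_take, List.take_range] at h
  rw [h, List.length_map, List.length_range, min_eq_left (h ▸ by simp)]

lemma List.Nodup.exists_prefix_mem {α : Type*} {l : List α} (hl : l.Nodup) (a : α) :
    ∃ l', l <+: l' ∧ l'.Nodup ∧ a ∈ l' ∧ ∀ x ∈ l', x ∈ l ∨ x = a := by
  by_cases ha : a ∈ l
  · exact ⟨l, List.prefix_refl l, hl, ha, fun x hx => Or.inl hx⟩
  · refine ⟨l ++ [a], List.prefix_append l [a], ?_, by simp, by simp⟩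
    refine List.nodup_append.mpr ⟨hl, List.nodup_singleton a, ?_⟩
    simpa using fun x hx (hxa : x = a) => ha (hxa ▸ hx)

lemma epref_eq_of_map_range_eq {E : ℕ → ℕ} {q : List ℕ} (hq : (List.range q.length).map E = q)
    (hpos : 0 < q.length) : epref E (q.length - 1) = q := by
  rw [epref, Nat.sub_add_cancel hpos, hq]

lemma exists_map_range_eq_of_prefix {α : Type*} [Inhabited α] (P : ℕ → List α)
    (hP : ∀ s, P s <+: P (s + 1)) (hlen : ∀ s, s ≤ (P s).length) :
    ∃ E : ℕ → α, ∀ s, (List.range (P s).length).map E = P s := by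
  have hmono : ∀ s s', s ≤ s' → P s <+: P s' := fun s s' h =>
    Nat.le_induction (List.prefix_refl _) (fun n _ ih => ih.trans (hP n)) s' h
  refine ⟨fun n => (P (n + 1)).getD n default, fun s =>
    List.ext_getElem (by simp) fun n hn hn' => ?_⟩
  have hn1 : n < (P (n + 1)).length := Nat.lt_of_lt_of_le n.lt_succ_self (hlen (n + 1))
  simp only [List.getElem_map, List.getElem_range, List.getD_eq_getElem _ _ hn1]
  rcases le_total s (n + 1) with h | h
  · exact ((hmono _ _ h).getElem hn').symm
  · exact (hmono _ _ h).getElem hn1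

lemma exists_isEnum_map_range_eq {S : Set ℕ} (hS : S.Infinite) {p : List ℕ} (hp : p.Nodup)
    (hpS : ∀ x ∈ p, x ∈ S) : ∃ E, IsEnum E S ∧ (List.range p.length).map E = p := by
  set R : Set ℕ := S \ {x | x ∈ p}
  have hR : R.Infinite := hS.sdiff p.finite_toSet
  have hrange : Set.range (Nat.nth (· ∈ R)) = R := Nat.range_nth_of_infinite hR
  let E : ℕ → ℕ := Sum.elim p.get (Nat.nth (· ∈ R)) ∘ (finSumNatEquiv p.length).symm
  refine ⟨E, ⟨?_, ?_⟩, ?_⟩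
  · refine (Function.Injective.sumElim (List.nodup_iff_injective_get.mp hp)
      (Nat.nth_injective hR) fun i k hik => ?_).comp (Equiv.injective _)
    have hkR : Nat.nth (· ∈ R) k ∈ R := Nat.nth_mem_of_infinite hR k
    exact hkR.2 (hik ▸ List.get_mem p i)
  · rw [Set.range_comp, Equiv.range_eq_univ, Set.image_univ, Set.Sum.elim_range,
      Set.range_list_get, hrange]
    exact Set.union_sdiff_cancel fun x hx => hpS x hx
  · refine List.ext_getElem (by simp) fun n hn _ => ?_
    simp only [List.length_map, List.length_range] at hn
    simp [E, finSumNatEquiv_symm_apply_of_lt hn]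

theorem exists_isEnum_infinite_setOf_epref {K : Set ℕ} (hK : K.Infinite) (G : List ℕ → Prop)
    (hG : ∀ p : List ℕ, p.Nodup → (∀ x ∈ p, x ∈ K) →
      ∃ q, p <+: q ∧ p.length < q.length ∧ q.Nodup ∧ (∀ x ∈ q, x ∈ K) ∧ G q) :
    ∃ E, IsEnum E K ∧ {t | G (epref E t)}.Infinite := by
  let Prefix := {p : List ℕ // p.Nodup ∧ ∀ x ∈ p, x ∈ K}
  -- Round `s` first forces `G` and then adds the `s`-th element of `K`.
  have hround : ∀ (p : Prefix) (s : ℕ), ∃ q : Prefix, ∃ r, p.1 <+: r ∧ p.1.length < r.length ∧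
      G r ∧ r <+: q.1 ∧ Nat.nth (· ∈ K) s ∈ q.1 := by
    intro p s
    obtain ⟨r, hpr, hlen, hr, hrK, hGr⟩ := hG p.1 p.2.1 p.2.2
    obtain ⟨q, hrq, hq, hsq, hqr⟩ := hr.exists_prefix_mem (Nat.nth (· ∈ K) s)
    refine ⟨⟨q, hq, fun x hx => ?_⟩, r, hpr, hlen, hGr, hrq, hsq⟩
    rcases hqr x hx with hx | rfl
    exacts [hrK x hx, Nat.nth_mem_of_infinite hK s]
  choose next forced hnext using hround
  let P : ℕ → Prefix := fun s => Nat.rec ⟨[], List.nodup_nil, by simp⟩ (fun s p => next p s) s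
  have hP : ∀ s, P (s + 1) = next (P s) s := fun s => rfl
  have hlen_lt : ∀ s, (P s).1.length < (P (s + 1)).1.length := fun s =>
    (hnext (P s) s).2.1.trans_le (hP s ▸ (hnext (P s) s).2.2.2.1.length_le)
  have hlen : ∀ s, s ≤ (P s).1.length := by
    intro s
    induction s with
    | zero => exact Nat.zero_le _
    | succ s ih => exact ih.trans_lt (hlen_lt s)
  obtain ⟨E, hE⟩ := exists_map_range_eq_of_prefix (fun s => (P s).1)
    (fun s => (hnext (P s) s).1.trans (hP s ▸ (hnext (P s) s).2.2.2.1)) hlen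
  have hmem : ∀ s, ∀ n < (P s).1.length, E n ∈ (P s).1 := fun s n hn =>
    hE s ▸ List.mem_map_of_mem (List.mem_range.mpr hn)
  refine ⟨E, ⟨fun a b hab => ?_, ?_⟩, ?_⟩
  · have hs := hlen (max a b + 1)
    have hnd := hE (max a b + 1) ▸ (P (max a b + 1)).2.1
    exact (List.nodup_map_iff_inj_on List.nodup_range).mp hnd a
      (List.mem_range.mpr (by omega)) b (List.mem_range.mpr (by omega)) hab
  · refine Set.Subset.antisymm ?_ fun x hx => ?_
    · rintro _ ⟨n, rfl⟩
      exact (P (n + 1)).2.2 _ (hmem (n + 1) n (n.lt_succ_self.trans_le (hlen _)))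
    · obtain ⟨s, rfl⟩ : x ∈ Set.range (Nat.nth (· ∈ K)) := by
        rwa [show Set.range (Nat.nth (· ∈ K)) = K from Nat.range_nth_of_infinite hK]
      have hs := (hnext (P s) s).2.2.2.2
      rw [← hP, ← hE (s + 1), List.mem_map] at hs
      obtain ⟨n, -, hn⟩ := hs
      exact ⟨n, hn⟩
  · refine Set.infinite_of_forall_exists_gt fun s => ?_
    obtain ⟨-, hlt, hGr, hpre, -⟩ := hnext (P (s + 1)) (s + 1)
    have hr := (hP (s + 1) ▸ hE (s + 2) ▸ hpre).map_range_length_eq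
    have hs := hlen (s + 1)
    exact ⟨_, show G _ by rwa [epref_eq_of_map_range_eq hr (by omega)], by omega⟩

lemma IsPerfectTower.eventually_mem {Λ : ℕ → Set ℕ} {K : Set ℕ} (hT : IsPerfectTower Λ K)
    {x : ℕ} (hx : x ∈ K) : ∀ᶠ i in atTop, x ∈ Λ i := by
  rw [← hT.complete, Set.mem_iUnion] at hx
  obtain ⟨k, hk⟩ := hx
  rw [towerB] at hk
  exact eventually_atTop.mpr ⟨k, hk.1⟩

lemma GuaranteesValidity.exists_extension_subset_tower {L : ℕ → Set ℕ} {f : List ℕ → ℕ}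
    (hf : GuaranteesValidity L f) {Λ : ℕ → Set ℕ} {K : Set ℕ} (hΛL : ∀ j, ∃ i, Λ j = L i)
    (hT : IsPerfectTower Λ K) {p : List ℕ} (hp : p.Nodup) (hpK : ∀ x ∈ p, x ∈ K) :
    ∃ q, p <+: q ∧ p.length < q.length ∧ q.Nodup ∧ (∀ x ∈ q, x ∈ K) ∧ ∃ j, L (f q) ⊆ Λ j := by
  obtain ⟨j, hj⟩ :=
    ((p.finite_toSet.eventually_all).mpr fun x hx => hT.eventually_mem (hpK x hx)).exists
  obtain ⟨i, hi⟩ := hΛL j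
  obtain ⟨E, hE, hEp⟩ := exists_isEnum_map_range_eq (hT.infinite j) hp hj
  obtain ⟨t0, ht0⟩ := hf i E (hi ▸ hE)
  set t := max t0 p.length
  refine ⟨epref E t, ?_, by simp [epref, t], List.nodup_range.map hE.1, ?_, j,
    hi ▸ ht0 t (le_max_left _ _)⟩
  · have hpre := List.map_range_prefix E (show p.length ≤ t + 1 by omega)
    rwa [hEp] at hpre
  · intro x hx
    obtain ⟨n, -, rfl⟩ := List.mem_map.mp hx
    exact (hT.proper j).subset (hE.2 ▸ Set.mem_range_self n)

theorem stmt5_general (L : ℕ → Set ℕ) (z : ℕ)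
    (htower : ∀ ε : ℝ, 0 < ε →
      ∃ Λ : ℕ → Set ℕ, (∀ j, ∃ i, Λ j = L i) ∧ IsPerfectTower Λ (L z) ∧
        ∀ j, upperDensity (Λ j) (L z) ≤ ε) :
    ∀ f : List ℕ → ℕ, GuaranteesValidity L f →
      ∀ ε : ℝ, 0 < ε →
        ∃ E : ℕ → ℕ, IsEnum E (L z) ∧
          {t : ℕ | upperDensity (L (f (epref E t))) (L z) ≤ ε}.Infinite := by
  intro f hf ε hε
  obtain ⟨Λ, hΛL, hT, hdens⟩ := htower ε hε
  have hK : (L z).Infinite := (hT.infinite 0).mono (hT.proper 0).subset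
  refine exists_isEnum_infinite_setOf_epref hK (fun q => upperDensity (L (f q)) (L z) ≤ ε)
    fun p hp hpK => ?_
  obtain ⟨q, hpq, hlen, hq, hqK, j, hj⟩ := hf.exists_extension_subset_tower hΛL hT hp hpK
  exact ⟨q, hpq, hlen, hq, hqK, (upperDensity_mono _ hj).trans (hdens j)⟩

/-- If for every `ε > 0` there is an infinite perfect tower of languages from the
collection with terminal language `K = L z`, all of whose languages have upper
density at most `ε` in `K`, then every valid index-based algorithm has, for every
`ε > 0`, an enumeration of `K` on which it guesses languages of upper density at
most `ε` in `K` at infinitely many steps. -/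
theorem stmt5 (L : ℕ → Set ℕ) (hinf : ∀ i, (L i).Infinite) (z : ℕ)
    (htower : ∀ ε : ℝ, 0 < ε →
      ∃ Λ : ℕ → Set ℕ, (∀ j, ∃ i, Λ j = L i) ∧ IsPerfectTower Λ (L z) ∧
        ∀ j, upperDensity (Λ j) (L z) ≤ ε) :
    ∀ f : List ℕ → ℕ, GuaranteesValidity L f →
      ∀ ε : ℝ, 0 < ε →
        ∃ E : ℕ → ℕ, IsEnum E (L z) ∧
          {t : ℕ | upperDensity (L (f (epref E t))) (L z) ≤ ε}.Infinite :=
  stmt5_general L z htower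
end

section
/- Let X be a countable collection of languages, K ∈ X, and τ = τ(X, K) its truth index. There exists an index-based generation algorithm f that guarantees validity for X and such that for every enumeration E of K and every real β < τ, only finitely many steps t satisfy μ_up(L_{i_t}, K) ≤ β, where i_t = f(w_1, …, w_t). -/
/- The truth index `τ(X, K)` for the collection `L` and true language `K = L z`:
the infimum of the set `D` of `δ ∈ [0,1]` for which there is an infinite perfect
tower of languages from the collection with terminal language `K` all of whose
languages have upper density at most `δ` in `K`; it equals `1` when `D` is empty
(in particular when no such tower exists at all). -/
open Classical in
noncomputable def truthIndex (L : ℕ → Set ℕ) (z : ℕ) : ℝ :=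
  if ({δ : ℝ | δ ∈ Set.Icc (0 : ℝ) 1 ∧
        ∃ Λ : ℕ → Set ℕ, (∀ j, ∃ i, Λ j = L i) ∧ IsPerfectTower Λ (L z) ∧
          ∀ j, upperDensity (Λ j) (L z) ≤ δ}).Nonempty
  then sInf {δ : ℝ | δ ∈ Set.Icc (0 : ℝ) 1 ∧
        ∃ Λ : ℕ → Set ℕ, (∀ j, ∃ i, Λ j = L i) ∧ IsPerfectTower Λ (L z) ∧
          ∀ j, upperDensity (Λ j) (L z) ≤ δ}
  else 1

/-! ### Auxiliary density lemmas -/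

lemma ud_seq_nonneg (L K : Set ℕ) (N : ℕ) :
    0 ≤ ((Set.ncard {n : ℕ | n < N ∧ Nat.nth (· ∈ K) n ∈ L}) : ℝ) / N :=
  div_nonneg (Nat.cast_nonneg _) (Nat.cast_nonneg _)

lemma ud_card_le (L K : Set ℕ) (N : ℕ) :
    Set.ncard {n : ℕ | n < N ∧ Nat.nth (· ∈ K) n ∈ L} ≤ N := by
  have h1 : {n : ℕ | n < N ∧ Nat.nth (· ∈ K) n ∈ L} ⊆ ↑(Finset.range N) := by
    intro n hn; simp [hn.1]
  calc Set.ncard {n : ℕ | n < N ∧ Nat.nth (· ∈ K) n ∈ L}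
      ≤ (↑(Finset.range N) : Set ℕ).ncard := Set.ncard_le_ncard h1 (Finset.range N).finite_toSet
    _ = N := by rw [Set.ncard_coe_finset, Finset.card_range]

lemma ud_seq_le_one (L K : Set ℕ) (N : ℕ) :
    ((Set.ncard {n : ℕ | n < N ∧ Nat.nth (· ∈ K) n ∈ L}) : ℝ) / N ≤ 1 := by
  rcases Nat.eq_zero_or_pos N with h | h
  · simp [h]
  · rw [div_le_one (by exact_mod_cast h)]
    exact_mod_cast ud_card_le L K N

lemma ud_nonneg (L K : Set ℕ) : 0 ≤ upperDensity L K := by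
  apply Filter.le_limsup_of_frequently_le
  · exact Filter.Frequently.of_forall (ud_seq_nonneg L K)
  · exact Filter.isBoundedUnder_of ⟨1, ud_seq_le_one L K⟩

lemma ud_le_one (L K : Set ℕ) : upperDensity L K ≤ 1 := by
  apply Filter.limsup_le_of_le
  · exact Filter.isCoboundedUnder_le_of_le _ (ud_seq_nonneg L K)
  · exact Filter.Eventually.of_forall (ud_seq_le_one L K)

lemma ud_self (K : Set ℕ) (h : K.Infinite) : upperDensity K K = 1 := by
  have hseq : ∀ N : ℕ, 1 ≤ N →
      ((Set.ncard {n : ℕ | n < N ∧ Nat.nth (· ∈ K) n ∈ K}) : ℝ) / N = 1 := by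
    intro N hN
    have hset : {n : ℕ | n < N ∧ Nat.nth (· ∈ K) n ∈ K} = ↑(Finset.range N) := by
      ext n; simp only [Set.mem_setOf_eq, Finset.coe_range, Set.mem_Iio]
      exact ⟨fun h' => h'.1, fun h' => ⟨h', Nat.nth_mem_of_infinite h n⟩⟩
    rw [hset, Set.ncard_coe_finset, Finset.card_range]
    exact div_self (by positivity)
  have heq : upperDensity K K = Filter.limsup (fun _ : ℕ => (1 : ℝ)) Filter.atTop := by
    apply Filter.limsup_congr
    filter_upwards [Filter.eventually_ge_atTop 1] with N hN
    exact hseq N hN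
  rw [heq, Filter.limsup_const]

lemma truthIndex_le_one (L : ℕ → Set ℕ) (z : ℕ) : truthIndex L z ≤ 1 := by
  unfold truthIndex
  split_ifs with h
  · obtain ⟨δ, hδ⟩ := h
    exact le_trans (csInf_le ⟨0, fun x hx => hx.1.1⟩ hδ) hδ.1.2
  · exact le_refl 1

/-! ### Tower structure lemmas -/

lemma towerB_eq (Λ : ℕ → Set ℕ) (k : ℕ) :
    towerB Λ k = {w | ∀ i, k ≤ i → w ∈ Λ i} \ {w | ∃ m, ∃ _ : m < k, w ∈ towerB Λ m} := by
  rw [towerB]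

lemma towerB_union (Λ : ℕ → Set ℕ) : ∀ k : ℕ,
    {w | ∃ m, ∃ _ : m < k + 1, w ∈ towerB Λ m} = {w | ∀ i, k ≤ i → w ∈ Λ i} := by
  intro k
  induction k with
  | zero =>
    ext w
    simp only [Set.mem_setOf_eq, Nat.lt_one_iff]
    constructor
    · rintro ⟨m, hm, hw⟩
      have hm0 : m = 0 := by omega
      subst hm0
      rw [towerB_eq] at hw
      exact fun i hi => hw.1 i hi
    · intro hw
      refine ⟨0, Nat.zero_lt_one, ?_⟩
      rw [towerB_eq]
      exact ⟨hw, by simp⟩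
  | succ k ih =>
    have ih' := Set.ext_iff.mp ih
    ext w
    simp only [Set.mem_setOf_eq] at ih' ⊢
    constructor
    · rintro ⟨m, hm, hw⟩
      rcases Nat.lt_succ_iff_lt_or_eq.mp hm with hm' | rfl
      · have h2 := (ih' w).mp ⟨m, hm', hw⟩
        exact fun i hi => h2 i (by omega)
      · rw [towerB_eq] at hw
        exact hw.1
    · intro hw
      by_cases hw' : ∀ i, k ≤ i → w ∈ Λ i
      · obtain ⟨m, hm, hmem⟩ := (ih' w).mpr hw'
        exact ⟨m, by omega, hmem⟩
      · refine ⟨k + 1, by omega, ?_⟩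
        rw [towerB_eq]
        refine ⟨hw, ?_⟩
        rintro ⟨m, hm, hmem⟩
        exact hw' ((ih' w).mp ⟨m, hm, hmem⟩)

/-! ### The algorithm -/

def isCons (L : ℕ → Set ℕ) (s : List ℕ) (n : ℕ) : Prop := ∀ x ∈ s, x ∈ L n
def isCrit (L : ℕ → Set ℕ) (s : List ℕ) (n : ℕ) : Prop :=
  isCons L s n ∧ ∀ j, j ≤ n → isCons L s j → L n ⊆ L j

open Classical in
noncomputable def myf (L : ℕ → Set ℕ) (s : List ℕ) : ℕ :=
  Nat.findGreatest (fun n => isCrit L s n) s.length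

lemma epref_mem (E : ℕ → ℕ) {s t : ℕ} (h : s ≤ t) : E s ∈ epref E t := by
  simp only [epref, List.mem_map]
  exact ⟨s, by simp [List.mem_range]; omega, rfl⟩

lemma main_ev (L : ℕ → Set ℕ) (i : ℕ) (E : ℕ → ℕ) (hE : IsEnum E (L i)) :
    ∃ t0 : ℕ, ∀ t ≥ t0,
      (∀ x ∈ epref E t, x ∈ L (myf L (epref E t))) ∧ L (myf L (epref E t)) ⊆ L i := by
  classical
  obtain ⟨hinj, hr⟩ := hE
  set g : ℕ → ℕ := fun j => if h : ∃ s, E s ∉ L j then h.choose else 0 with hg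
  refine ⟨max ((Finset.range (i + 1)).sup g) i, fun t ht => ?_⟩
  have hti : i ≤ t := le_trans (le_max_right _ _) ht
  have hlen : (epref E t).length = t + 1 := by simp [epref]
  have hconsI : isCons L (epref E t) i := by
    intro x hx
    have hxr : x ∈ Set.range E := by
      simp only [epref, List.mem_map] at hx
      obtain ⟨k, _, hk⟩ := hx
      exact ⟨k, hk⟩
    rwa [hr] at hxr
  have hcritI : isCrit L (epref E t) i := by
    refine ⟨hconsI, fun j hj hconsJ => ?_⟩
    by_contra hns
    obtain ⟨w, hw1, hw2⟩ := Set.not_subset.mp hns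
    have hwr : w ∈ Set.range E := by rwa [hr]
    obtain ⟨s, rfl⟩ := hwr
    have h : ∃ s', E s' ∉ L j := ⟨s, hw2⟩
    have hgj : g j = h.choose := by simp [hg, dif_pos h]
    have hle : h.choose ≤ t := by
      rw [← hgj]
      exact le_trans (le_trans (Finset.le_sup (Finset.mem_range.mpr (by omega)))
        (le_max_left _ _)) ht
    exact h.choose_spec (hconsJ (E h.choose) (epref_mem E hle))
  have hib : i ≤ (epref E t).length := by omega
  have hspec : isCrit L (epref E t) (myf L (epref E t)) := by
    have := Nat.findGreatest_spec (P := fun n => isCrit L (epref E t) n) hib hcritI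
    simpa [myf] using this
  have hge : i ≤ myf L (epref E t) := by
    have := Nat.le_findGreatest (P := fun n => isCrit L (epref E t) n) hib hcritI
    simpa [myf] using this
  exact ⟨hspec.1, hspec.2 i hge hconsI⟩

/-- There is a valid index-based generation algorithm `f` such that on every
enumeration of `K = L z`, for every `β < τ` (the truth index), only finitely many
steps have a guessed language of upper density at most `β` in `K`. -/
theorem stmt9 (L : ℕ → Set ℕ) (hinf : ∀ i, (L i).Infinite) (z : ℕ) :
    ∃ f : List ℕ → ℕ, GuaranteesValidity L f ∧
      ∀ E : ℕ → ℕ, IsEnum E (L z) → ∀ β : ℝ, β < truthIndex L z →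
        {t : ℕ | upperDensity (L (f (epref E t))) (L z) ≤ β}.Finite := by
  classical
  refine ⟨myf L, ?_, ?_⟩
  · intro i E hE
    obtain ⟨t0, h⟩ := main_ev L i E hE
    exact ⟨t0, fun t ht => (h t ht).2⟩
  intro E hE β hβ
  by_contra hfin
  rcases lt_or_ge β 0 with hβ0 | hβ0
  · apply hfin
    have hempty : {t : ℕ | upperDensity (L (myf L (epref E t))) (L z) ≤ β} = ∅ := by
      ext t
      simp only [Set.mem_setOf_eq, Set.mem_empty_iff_false, iff_false, not_le]
      exact lt_of_lt_of_le hβ0 (ud_nonneg _ _)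
    rw [hempty]
    exact Set.finite_empty
  have hβ1 : β < 1 := lt_of_lt_of_le hβ (truthIndex_le_one L z)
  obtain ⟨t0, hev⟩ := main_ev L z E hE
  set Λ' : ℕ → Set ℕ := fun u => L (myf L (epref E u)) with hΛ'
  set T' : Set ℕ := {u | t0 ≤ u ∧ upperDensity (Λ' u) (L z) ≤ β} with hT'def
  have hT'inf : T'.Infinite := by
    have hSinf : Set.Infinite {t | upperDensity (L (myf L (epref E t))) (L z) ≤ β} := hfin
    have heq : T' = {t | upperDensity (L (myf L (epref E t))) (L z) ≤ β} \ Set.Iio t0 := by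
      ext u
      simp only [hT'def, Set.mem_setOf_eq, Set.mem_diff, Set.mem_Iio, not_lt, hΛ']
      tauto
    rw [heq]
    exact hSinf.diff (Set.finite_Iio t0)
  have hKinf : (L z).Infinite := hinf z
  have hsub : ∀ u ∈ T', Λ' u ⊆ L z := fun u hu => (hev u hu.1).2
  have hcons : ∀ u ∈ T', ∀ s, s ≤ u → E s ∈ Λ' u := fun u hu s hs =>
    (hev u hu.1).1 (E s) (epref_mem E hs)
  have hne : ∀ u ∈ T', Λ' u ≠ L z := by
    intro u hu h
    have h2 := hu.2
    rw [h, ud_self _ hKinf] at h2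
    linarith
  have hprop : ∀ u ∈ T', Λ' u ⊂ L z := fun u hu => (hsub u hu).ssubset_of_ne (hne u hu)
  -- fibers of Λ' over T' are finite
  have hfib1 : ∀ M : Set ℕ, {u | u ∈ T' ∧ Λ' u = M}.Finite := by
    intro M
    by_cases hM : {u | u ∈ T' ∧ Λ' u = M}.Infinite
    · exfalso
      obtain ⟨u1, hu1⟩ := hM.nonempty
      apply hne u1 hu1.1
      rw [hu1.2]
      apply Set.Subset.antisymm
      · rw [← hu1.2]
        exact hsub u1 hu1.1
      · intro w hw
        have hwr : w ∈ Set.range E := by rw [hE.2]; exact hw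
        obtain ⟨s, rfl⟩ := hwr
        obtain ⟨u, hu, hsu⟩ := hM.exists_gt s
        rw [← hu.2]
        exact hcons u hu.1 s (le_of_lt hsu)
    · exact Set.not_infinite.mp hM
  -- witness function
  have hWex : ∀ M : Set ℕ, ∃ s : ℕ, M ⊂ L z → E s ∉ M := by
    intro M
    by_cases h : M ⊂ L z
    · obtain ⟨w, hw1, hw2⟩ := Set.exists_of_ssubset h
      have hwr : w ∈ Set.range E := by rw [hE.2]; exact hw1
      obtain ⟨s, rfl⟩ := hwr
      exact ⟨s, fun _ => hw2⟩
    · exact ⟨0, fun h' => absurd h' h⟩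
  choose W hW using hWex
  -- the step function
  have hstepex : ∀ (a : ℕ) (G : Finset (Set ℕ)), ∃ u : ℕ, u ∈ T' ∧ a < u ∧ Λ' u ∉ G := by
    intro a G
    have hfinbad : ({u | u ∈ T' ∧ Λ' u ∈ (G : Set (Set ℕ))} ∪ Set.Iic a).Finite := by
      apply Set.Finite.union _ (Set.finite_Iic a)
      have heq : {u | u ∈ T' ∧ Λ' u ∈ (G : Set (Set ℕ))} =
          ⋃ M ∈ G, {u | u ∈ T' ∧ Λ' u = M} := by
        ext u
        simp only [Set.mem_setOf_eq, Set.mem_iUnion, Finset.mem_coe]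
        constructor
        · rintro ⟨h1, h2⟩; exact ⟨Λ' u, h2, h1, rfl⟩
        · rintro ⟨M, hM, h1, rfl⟩; exact ⟨h1, hM⟩
      rw [heq]
      exact Set.Finite.biUnion G.finite_toSet (fun M _ => hfib1 M)
    obtain ⟨u, hu⟩ := (hT'inf.diff hfinbad).nonempty
    refine ⟨u, hu.1, ?_, ?_⟩
    · by_contra h
      exact hu.2 (Or.inr (Set.mem_Iic.mpr (not_lt.mp h)))
    · intro h
      exact hu.2 (Or.inl ⟨hu.1, h⟩)
  choose nxt hnxt using hstepex
  obtain ⟨u1, hu1⟩ := hT'inf.nonempty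
  -- the recursively defined sequence of times and guessed-language collections
  obtain ⟨g, hg0, hgs⟩ : ∃ g : ℕ → ℕ × Finset (Set ℕ), g 0 = (u1, {Λ' u1}) ∧
      ∀ j, g (j + 1) = (nxt (max (g j).1 (W (Λ' (g j).1))) (g j).2,
        insert (Λ' (nxt (max (g j).1 (W (Λ' (g j).1))) (g j).2)) (g j).2) :=
    ⟨fun j => Nat.rec (u1, ({Λ' u1} : Finset (Set ℕ)))
      (fun _ p => (nxt (max p.1 (W (Λ' p.1))) p.2,
        insert (Λ' (nxt (max p.1 (W (Λ' p.1))) p.2)) p.2)) j, rfl, fun j => rfl⟩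
  obtain ⟨tt, GG, h0t, h0G, e1, e2⟩ : ∃ (tt : ℕ → ℕ) (GG : ℕ → Finset (Set ℕ)),
      tt 0 = u1 ∧ GG 0 = {Λ' u1} ∧
      (∀ j, tt (j + 1) = nxt (max (tt j) (W (Λ' (tt j)))) (GG j)) ∧
      (∀ j, GG (j + 1) = insert (Λ' (tt (j + 1))) (GG j)) := by
    refine ⟨fun j => (g j).1, fun j => (g j).2, by simp [hg0], by simp [hg0],
      fun j => by simp [hgs j], fun j => by simp [hgs j]⟩
  have hkey : ∀ j, tt j ∈ T' ∧ (∀ m, m ≤ j → Λ' (tt m) ∈ GG j) := by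
    intro j
    induction j with
    | zero =>
      refine ⟨by rw [h0t]; exact hu1, fun m hm => ?_⟩
      have hm0 : m = 0 := by omega
      subst hm0
      rw [h0t, h0G]
      exact Finset.mem_singleton_self _
    | succ j ih =>
      have h1 := hnxt (max (tt j) (W (Λ' (tt j)))) (GG j)
      refine ⟨by rw [e1 j]; exact h1.1, fun m hm => ?_⟩
      rw [e2 j]
      rcases Nat.lt_succ_iff_lt_or_eq.mp (Nat.lt_succ_of_le hm) with hm' | rfl
      · exact Finset.mem_insert_of_mem (ih.2 m (by omega))
      · exact Finset.mem_insert_self _ _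
  have htT : ∀ j, tt j ∈ T' := fun j => (hkey j).1
  have hmono : StrictMono tt := by
    apply strictMono_nat_of_lt_succ
    intro j
    rw [e1 j]
    exact lt_of_le_of_lt (le_max_left _ _) (hnxt _ _).2.1
  have hWlt : ∀ j, W (Λ' (tt j)) < tt (j + 1) := by
    intro j
    rw [e1 j]
    exact lt_of_le_of_lt (le_max_right _ _) (hnxt _ _).2.1
  have hdist : ∀ m j, m < j → Λ' (tt j) ≠ Λ' (tt m) := by
    intro m j hmj hEq
    obtain ⟨j', rfl⟩ : ∃ j', j = j' + 1 := ⟨j - 1, by omega⟩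
    have h1 := (hnxt (max (tt j') (W (Λ' (tt j')))) (GG j')).2.2
    rw [← e1 j'] at h1
    exact h1 (hEq ▸ (hkey j').2 m (by omega))
  have hmemE : ∀ s j, s ≤ tt j → E s ∈ Λ' (tt j) := fun s j h => hcons (tt j) (htT j) s h
  set ΛT : ℕ → Set ℕ := fun j => Λ' (tt j) with hΛT
  have hTower : IsPerfectTower ΛT (L z) := by
    constructor
    · intro a b hab
      by_contra hne'
      rcases lt_or_gt_of_ne hne' with h | h
      · exact hdist a b h hab.symm
      · exact hdist b a h hab
    · intro j
      exact hinf _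
    · intro j
      exact hprop _ (htT j)
    · intro j
      cases j with
      | zero =>
        refine ⟨E 0, ?_⟩
        rw [towerB_eq]
        refine ⟨fun i _ => hmemE 0 i (Nat.zero_le _), ?_⟩
        rintro ⟨m, hm, _⟩
        omega
      | succ k =>
        have hWk := hW (Λ' (tt k)) (hprop _ (htT k))
        refine ⟨E (W (Λ' (tt k))), ?_⟩
        rw [towerB_eq, towerB_union]
        constructor
        · intro i hi
          exact hmemE _ i (le_trans (le_of_lt (hWlt k)) (hmono.monotone hi))
        · intro hc
          exact hWk (hc k (le_refl k))
    · apply Set.Subset.antisymm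
      · apply Set.iUnion_subset
        intro j w hw
        rw [towerB_eq] at hw
        exact hsub (tt j) (htT j) (hw.1 j (le_refl j))
      · intro w hw
        have hwr : w ∈ Set.range E := by rw [hE.2]; exact hw
        obtain ⟨s, rfl⟩ := hwr
        have hA : E s ∈ {w | ∀ i, s ≤ i → w ∈ ΛT i} := by
          intro i hi
          exact hmemE s i (le_trans hi (hmono.le_apply))
        rw [← towerB_union ΛT s] at hA
        obtain ⟨m, hm, hmem⟩ := hA
        exact Set.mem_iUnion.mpr ⟨m, hmem⟩
  have hden : ∀ j, upperDensity (ΛT j) (L z) ≤ min β 1 := fun j =>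
    le_min (htT j).2 (ud_le_one _ _)
  have hmemD : min β 1 ∈ {δ : ℝ | δ ∈ Set.Icc (0 : ℝ) 1 ∧
      ∃ Λ : ℕ → Set ℕ, (∀ j, ∃ i, Λ j = L i) ∧ IsPerfectTower Λ (L z) ∧
        ∀ j, upperDensity (Λ j) (L z) ≤ δ} :=
    ⟨⟨le_min hβ0 zero_le_one, min_le_right _ _⟩, ΛT,
      fun j => ⟨myf L (epref E (tt j)), rfl⟩, hTower, hden⟩
  have hle : truthIndex L z ≤ min β 1 := by
    unfold truthIndex
    split_ifs with hne'
    · exact csInf_le ⟨0, fun x hx => hx.1.1⟩ hmemD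
    · exact absurd ⟨_, hmemD⟩ hne'
  have : truthIndex L z ≤ β := le_trans hle (min_le_left _ _)
  linarith
end

section
/- For every real c < 1/2 there exists a uniform element-based generation algorithm f (a function taking a countable collection X of languages and a finite sequence of strings, and returning a string) such that for every countable collection X, every K ∈ X, and every enumeration E of K: f achieves element-based generation in the limit on E, and μ_up(O(E, f), K) ≥ c. -/
/-!
Call `i` critical for a sample if `L i` contains the sample and is contained in every earlier
language that does. Eventually the critical indices `≤ z` no longer change, `z` is critical, and
every critical index `≥ z` names a subset of `K = L z`. At step `t` the generator plays the
largest critical index `i` such that no index `≤ i` changed its critical status during the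
steps `[t / D, t]`, and outputs the least string of `L i` that it has neither seen nor output.

Once play stays inside `K`, generation succeeds. If an index `i` with `L i ⊊ K` is played, a string
of `K \ L i` later removes `i` from the critical set, and every window containing that step plays
a smaller index. This descent is finite, so arbitrarily late windows `[t / D, t]` play `K` itself.
There the outputs are the least fresh elements of `K`, so below the current output the at least
`t - t / D` outputs of the window fill `K` up to at most `t + 1` seen strings, which gives density
close to `(D - 1) / (2D - 1)`, and this exceeds `c` for large `D`.
-/

open Filter Set

namespace ElementGeneration

section Density

open scoped Classical

lemma count_mem_eq_ncard (K : Set ℕ) (x : ℕ) : Nat.count (· ∈ K) x = (K ∩ Iio x).ncard := by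
  rw [Nat.count_eq_card_filter_range, ← ncard_coe_finset]
  congr 1
  ext a
  simp [and_comm]

lemma ncard_lt_and_nth_mem_le (K O : Set ℕ) (N : ℕ) :
    {n | n < N ∧ Nat.nth (· ∈ K) n ∈ O}.ncard ≤ N :=
  (ncard_le_ncard (fun _ hn => hn.1) (finite_Iio N)).trans_eq (ncard_Iio_nat N)

lemma ncard_inter_Iio_le {O K : Set ℕ} (hO : O ⊆ K) (x : ℕ) :
    (O ∩ Iio x).ncard ≤ {n | n < Nat.count (· ∈ K) x ∧ Nat.nth (· ∈ K) n ∈ O}.ncard := by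
  refine ncard_le_ncard_of_injOn (Nat.count (· ∈ K)) ?_ ?_
    ((finite_Iio _).subset fun _ hn => hn.1)
  · rintro k ⟨hkO, hkx⟩
    exact ⟨Nat.count_strict_mono (hO hkO) hkx, by rwa [Nat.nth_count (hO hkO)]⟩
  · rintro k ⟨hk, -⟩ k' ⟨hk', -⟩ h
    exact Nat.count_injective (hO hk) (hO hk') h

lemma le_upperDensity_of_frequently {O K : Set ℕ} {c : ℝ}
    (h : ∃ᶠ N in atTop, c * N ≤ {n | n < N ∧ Nat.nth (· ∈ K) n ∈ O}.ncard) :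
    c ≤ upperDensity O K := by
  refine le_limsup_of_frequently_le ((h.and_eventually (eventually_gt_atTop 0)).mono ?_) ?_
  · rintro N ⟨hN, hN0⟩
    rwa [le_div_iff₀ (by exact_mod_cast hN0)]
  · refine isBoundedUnder_of ⟨1, fun N => div_le_one_of_le₀ ?_ N.cast_nonneg⟩
    exact_mod_cast ncard_lt_and_nth_mem_le K O N

end Density

lemma exists_two_le_mul_two_mul_sub_one_lt {c : ℝ} (hc : c < 1 / 2) :
    ∃ D : ℕ, 2 ≤ D ∧ c * (2 * D - 1) < D - 1 := by
  obtain ⟨D₀, hD₀⟩ := exists_nat_gt ((1 - c) / (1 - 2 * c))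
  refine ⟨max D₀ 2, le_max_right _ _, ?_⟩
  have hD : (1 - c) / (1 - 2 * c) < (max D₀ 2 : ℕ) :=
    hD₀.trans_le (by exact_mod_cast le_max_left D₀ 2)
  rw [div_lt_iff₀ (by linarith)] at hD
  linarith

-- `(D - 1) / (2 * D - 1)` is the limit of `V / (t + 1 + V)` at `V = t - t / D`.
lemma eventually_mul_le_of_window {c : ℝ} {D : ℕ} (hD : 1 ≤ D)
    (hcD : c * (2 * D - 1) < D - 1) :
    ∀ᶠ t : ℕ in atTop, ∀ N V : ℕ, t - t / D ≤ V → N ≤ t + 1 + V → c * N ≤ V := by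
  set δ : ℝ := D - 1 - c * (2 * D - 1)
  have hδ : 0 < δ := by linarith
  filter_upwards [(tendsto_natCast_atTop_atTop (R := ℝ)).eventually_ge_atTop (c * D / δ)]
    with t ht N V hV hN
  rcases le_or_gt c 0 with hc | hc
  · exact (mul_nonpos_of_nonpos_of_nonneg hc N.cast_nonneg).trans V.cast_nonneg
  have hDV : D * t ≤ D * V + t := by
    have := Nat.mul_le_mul_left D hV
    rw [Nat.mul_sub] at this
    have := Nat.mul_div_le t D
    omega
  have hD1 : (1 : ℝ) ≤ D := by exact_mod_cast hD
  have hc1 : c < 1 := by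
    by_contra! h
    nlinarith [mul_le_mul_of_nonneg_right h (by linarith : (0 : ℝ) ≤ 2 * D - 1)]
  have hDV' : (1 - c) * ((D - 1) * t) ≤ (1 - c) * (D * V) := by
    refine mul_le_mul_of_nonneg_left ?_ (by linarith)
    have : (D : ℝ) * t ≤ D * V + t := by exact_mod_cast hDV
    linarith
  rw [div_le_iff₀ hδ] at ht
  have key : (D : ℝ) * (c * (t + 1 + V)) ≤ D * V := by linear_combination ht + hDV'
  calc c * N ≤ c * (t + 1 + V) := mul_le_mul_of_nonneg_left (by exact_mod_cast hN) hc.le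
    _ ≤ V := le_of_mul_le_mul_left key (by linarith)

@[simp]
lemma length_epref (E : ℕ → ℕ) (t : ℕ) : (epref E t).length = t + 1 := by
  simp [epref]

lemma epref_take (E : ℕ → ℕ) {s t : ℕ} (h : s ≤ t) : (epref E t).take (s + 1) = epref E s := by
  simp [epref, ← List.map_take, List.take_range, Nat.min_eq_left (Nat.succ_le_succ h)]

lemma mem_epref {E : ℕ → ℕ} {t a : ℕ} : a ∈ epref E t ↔ a ∈ E '' Iic t := by
  simp [epref]

lemma eventually_forall_mem_epref_iff (E : ℕ → ℕ) (S : Set ℕ) :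
    ∀ᶠ t in atTop, (∀ a ∈ epref E t, a ∈ S) ↔ range E ⊆ S := by
  by_cases h : range E ⊆ S
  · refine Eventually.of_forall fun t => iff_of_true (fun a ha => h ?_) h
    obtain ⟨s, -, rfl⟩ := mem_epref.1 ha
    exact mem_range_self s
  · obtain ⟨_, ⟨n, rfl⟩, hn⟩ := not_subset.1 h
    filter_upwards [eventually_ge_atTop n] with t ht
    exact iff_of_false (fun hS => hn (hS _ (mem_epref.2 ⟨n, ht, rfl⟩))) h

section Greedy

-- The earlier outputs are those on the nonempty proper prefixes `l.take (s + 1)` of `l`.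
noncomputable def greedyOut (P : List ℕ → Set ℕ) : List ℕ → ℕ := fun l =>
  sInf (P l \ ({a | a ∈ l} ∪
    ⋃ (s : ℕ) (_ : s ∈ Finset.range (l.length - 1)), {greedyOut P (l.take (s + 1))}))
termination_by l => l.length
decreasing_by
  rw [Finset.mem_range] at *
  rw [List.length_take]
  omega

variable (P : List ℕ → Set ℕ) (E : ℕ → ℕ)

def avoided (t : ℕ) : Set ℕ := E '' Iic t ∪ (fun s => greedyOut P (epref E s)) '' Iio t

lemma greedyOut_epref (t : ℕ) :
    greedyOut P (epref E t) = sInf (P (epref E t) \ avoided P E t) := by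
  rw [greedyOut]
  congr 3
  · ext a
    exact mem_epref
  · ext w
    simp only [mem_iUnion, mem_singleton_iff, Finset.mem_range, mem_image, mem_Iio]
    rw [length_epref, Nat.add_sub_cancel]
    constructor
    · rintro ⟨s, hs, rfl⟩
      exact ⟨s, hs, by rw [epref_take E hs.le]⟩
    · rintro ⟨s, hs, rfl⟩
      exact ⟨s, hs, by rw [epref_take E hs.le]⟩

lemma avoided_finite (t : ℕ) : (avoided P E t).Finite :=
  ((finite_Iic t).image _).union ((finite_Iio t).image _)

lemma avoided_mono {s t : ℕ} (h : s ≤ t) : avoided P E s ⊆ avoided P E t :=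
  union_subset_union (image_mono (Iic_subset_Iic.2 h)) (image_mono (Iio_subset_Iio h))

lemma greedyOut_mem_diff {t : ℕ} (hP : (P (epref E t)).Infinite) :
    greedyOut P (epref E t) ∈ P (epref E t) \ avoided P E t :=
  greedyOut_epref P E t ▸ Nat.sInf_mem (hP.sdiff (avoided_finite P E t)).nonempty

variable {P E} {K : Set ℕ} {a t : ℕ}

lemma greedyOut_strictMonoOn (hK : K.Infinite) (hP : ∀ s ∈ Icc a t, P (epref E s) = K) :
    StrictMonoOn (fun s => greedyOut P (epref E s)) (Icc a t) := by
  intro s hs s' hs' hss'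
  have hmem := greedyOut_mem_diff P E (t := s') (by rwa [hP s' hs'])
  rw [hP s' hs'] at hmem
  refine lt_of_le_of_ne ?_ fun h => hmem.2 (Or.inr ⟨s, hss', h⟩)
  change greedyOut P (epref E s) ≤ _
  rw [greedyOut_epref, hP s hs]
  exact Nat.sInf_le ⟨hmem.1, fun h => hmem.2 (avoided_mono P E hss'.le h)⟩

lemma sub_le_ncard_greedyOut (hK : K.Infinite) (hP : ∀ s ∈ Icc a t, P (epref E s) = K) :
    t - a ≤ (range (fun s => greedyOut P (epref E s)) ∩ K ∩
      Iio (greedyOut P (epref E t))).ncard := by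
  have hmono := greedyOut_strictMonoOn hK hP
  rw [← ncard_Ico_nat, ← (hmono.injOn.mono Ico_subset_Icc_self).ncard_image]
  refine ncard_le_ncard ?_ ((finite_Iio _).subset inter_subset_right)
  rintro _ ⟨s, hs, rfl⟩
  have hs' : s ∈ Icc a t := Ico_subset_Icc_self hs
  refine ⟨⟨mem_range_self s, ?_⟩, hmono hs' ⟨hs.1.trans hs.2.le, le_rfl⟩ hs.2⟩
  simpa [hP s hs'] using (greedyOut_mem_diff P E (t := s) (by rwa [hP s hs'])).1

open scoped Classical in
lemma count_greedyOut_le (hP : P (epref E t) = K) :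
    Nat.count (· ∈ K) (greedyOut P (epref E t)) ≤
      t + 1 + (range (fun s => greedyOut P (epref E s)) ∩ K ∩
        Iio (greedyOut P (epref E t))).ncard := by
  set x := greedyOut P (epref E t)
  have hsub : K ∩ Iio x ⊆
      E '' Iic t ∪ (range (fun s => greedyOut P (epref E s)) ∩ K ∩ Iio x) := by
    rintro k ⟨hk, hkx⟩
    by_contra hout
    have hfresh : k ∈ P (epref E t) \ avoided P E t := by
      refine ⟨hP ▸ hk, ?_⟩
      rintro (hseen | ⟨s, -, rfl⟩)
      · exact hout (Or.inl hseen)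
      · exact hout (Or.inr ⟨⟨mem_range_self s, hk⟩, hkx⟩)
    exact (Nat.sInf_le hfresh).not_gt (greedyOut_epref P E t ▸ hkx)
  rw [count_mem_eq_ncard]
  calc (K ∩ Iio x).ncard
      ≤ (E '' Iic t ∪ (range (fun s => greedyOut P (epref E s)) ∩ K ∩ Iio x)).ncard :=
        ncard_le_ncard hsub (((finite_Iic t).image E).union ((finite_Iio x).subset
          inter_subset_right))
    _ ≤ (E '' Iic t).ncard + _ := ncard_union_le _ _
    _ ≤ t + 1 + _ := by
        gcongr
        exact (ncard_image_le (finite_Iic t)).trans_eq (ncard_Iic_nat t)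

open scoped Classical in
theorem le_upperDensity_greedyOut {c : ℝ} {D : ℕ} (hD : 2 ≤ D) (hcD : c * (2 * D - 1) < D - 1)
    (hK : K.Infinite) (hwin : ∃ᶠ t in atTop, ∀ s, t / D ≤ s → s ≤ t → P (epref E s) = K) :
    c ≤ upperDensity (range (fun t => greedyOut P (epref E t)) ∩ K) K := by
  refine le_upperDensity_of_frequently (frequently_atTop.2 fun M => ?_)
  obtain ⟨t, ⟨hwin_t, hratio⟩, hMt⟩ := ((hwin.and_eventually
    (eventually_mul_le_of_window (by omega) hcD)).and_eventually
      (eventually_ge_atTop (2 * M))).exists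
  have hV := sub_le_ncard_greedyOut hK fun s hs => hwin_t s hs.1 hs.2
  have hN := count_greedyOut_le (hwin_t t (Nat.div_le_self t D) le_rfl)
  set O := range (fun s => greedyOut P (epref E s)) ∩ K
  have hnum := ncard_inter_Iio_le (O := O) inter_subset_right (greedyOut P (epref E t))
  refine ⟨_, ?_, (hratio _ _ hV hN).trans (by exact_mod_cast hnum)⟩
  have : t / D ≤ t / 2 := Nat.div_le_div_left hD (by norm_num)
  have := ncard_lt_and_nth_mem_le K O (Nat.count (· ∈ K) (greedyOut P (epref E t)))
  omega

end Greedy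

section Strategy

variable (L : ℕ → Set ℕ) (D : ℕ)

def critical (l : List ℕ) : Set ℕ :=
  {i | i < l.length ∧ (∀ a ∈ l, a ∈ L i) ∧ ∀ j < i, (∀ a ∈ l, a ∈ L j) → L i ⊆ L j}

-- With `l` of length `t + 1`, the critical status of `i` changes from step `u` to step `u + 1`,
-- for some `u + 1` in the window `[t / D, t]`.
def StatusChanges (l : List ℕ) (i : ℕ) : Prop :=
  ∃ u, (l.length - 1) / D ≤ u + 1 ∧ u + 1 < l.length ∧
    ¬(i ∈ critical L (l.take (u + 1)) ↔ i ∈ critical L (l.take (u + 2)))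

def stableCritical (l : List ℕ) : Set ℕ :=
  {i ∈ critical L l | ∀ j ≤ i, ¬StatusChanges L D l j}

noncomputable def playedIndex (l : List ℕ) : ℕ := sSup (stableCritical L D l)

variable {L D} {l : List ℕ} {i : ℕ}

lemma bddAbove_stableCritical : BddAbove (stableCritical L D l) :=
  ⟨l.length, fun _ hi => hi.1.1.le⟩

lemma playedIndex_mem (h : (stableCritical L D l).Nonempty) :
    playedIndex L D l ∈ stableCritical L D l :=
  Nat.sSup_mem h bddAbove_stableCritical

lemma le_playedIndex (h : i ∈ stableCritical L D l) : i ≤ playedIndex L D l :=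
  le_csSup bddAbove_stableCritical h

lemma playedIndex_lt_of_statusChanges (hne : (stableCritical L D l).Nonempty)
    (h : StatusChanges L D l i) : playedIndex L D l < i :=
  not_le.1 fun hle => (playedIndex_mem hne).2 i hle h

lemma statusChanges_epref_iff {E : ℕ → ℕ} {t : ℕ} : StatusChanges L D (epref E t) i ↔
    ∃ u, t / D ≤ u + 1 ∧ u < t ∧
      ¬(i ∈ critical L (epref E u) ↔ i ∈ critical L (epref E (u + 1))) := by
  simp only [StatusChanges, length_epref, Nat.add_sub_cancel]
  refine exists_congr fun u => and_congr_right fun _ => ?_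
  constructor
  · rintro ⟨hu, hne⟩
    refine ⟨by omega, ?_⟩
    rwa [epref_take E (by omega : u ≤ t), epref_take E (by omega : u + 1 ≤ t)] at hne
  · rintro ⟨hu, hne⟩
    refine ⟨by omega, ?_⟩
    rwa [epref_take E (by omega : u ≤ t), epref_take E (by omega : u + 1 ≤ t)]

lemma eventually_mem_critical_iff (E : ℕ → ℕ) (n : ℕ) :
    ∀ᶠ t in atTop, ∀ i ≤ n, i ∈ critical L (epref E t) ↔
      range E ⊆ L i ∧ ∀ j < i, range E ⊆ L j → L i ⊆ L j := by
  have hcons : ∀ᶠ t in atTop, ∀ j ∈ Iic n, (∀ a ∈ epref E t, a ∈ L j) ↔ range E ⊆ L j :=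
    (eventually_all_finite (finite_Iic n)).2 fun j _ => eventually_forall_mem_epref_iff E (L j)
  filter_upwards [hcons, eventually_ge_atTop n] with t hcons ht i hi
  simp only [critical, mem_ofPred_eq, length_epref, hcons i hi]
  constructor
  · rintro ⟨-, hi', hmin⟩
    exact ⟨hi', fun j hj hKj => hmin j hj ((hcons j (by simp; omega)).2 hKj)⟩
  · rintro ⟨hi', hmin⟩
    exact ⟨by omega, hi', fun j hj hcj => hmin j hj ((hcons j (by simp; omega)).1 hcj)⟩

lemma eventually_not_statusChanges (hD : 1 ≤ D) (E : ℕ → ℕ) (n : ℕ) :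
    ∀ᶠ t in atTop, ∀ i ≤ n, ¬StatusChanges L D (epref E t) i := by
  obtain ⟨T, hT⟩ := (eventually_mem_critical_iff (L := L) E n).exists_forall_of_atTop
  filter_upwards [eventually_ge_atTop (D * (T + 1))] with t ht i hi hch
  obtain ⟨u, hu, -, hne⟩ := statusChanges_epref_iff.1 hch
  have hTu : T + 1 ≤ t / D := (Nat.le_div_iff_mul_le hD).2 (by linarith)
  exact hne ((hT u (by omega) i hi).trans (hT (u + 1) (by omega) i hi).symm)

end Strategy

section Enumeration

variable {L : ℕ → Set ℕ} {D z : ℕ} {E : ℕ → ℕ}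

lemma eventually_playedIndex (hE : range E = L z) (hD : 1 ≤ D) :
    ∀ᶠ t in atTop, playedIndex L D (epref E t) ∈ stableCritical L D (epref E t) ∧
      L (playedIndex L D (epref E t)) ⊆ L z := by
  filter_upwards [eventually_mem_critical_iff E z, eventually_not_statusChanges hD E z]
    with t hcrit hstable
  have hz : z ∈ stableCritical L D (epref E t) :=
    ⟨(hcrit z le_rfl).2 ⟨hE.le, fun _ _ h => hE ▸ h⟩, hstable⟩
  have hp := playedIndex_mem ⟨z, hz⟩
  refine ⟨hp, ?_⟩
  rcases (le_playedIndex hz).eq_or_lt with heq | hlt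
  · rw [← heq]
  · refine hp.1.2.2 z hlt fun a ha => ?_
    obtain ⟨s, -, rfl⟩ := mem_epref.1 ha
    exact hE ▸ mem_range_self s

lemma exists_mem_critical_not_mem_succ {i s : ℕ} (hi : i ∈ critical L (epref E s))
    (hK : ¬range E ⊆ L i) :
    ∃ u, s ≤ u ∧ i ∈ critical L (epref E u) ∧ i ∉ critical L (epref E (u + 1)) := by
  obtain ⟨_, ⟨n, rfl⟩, hn⟩ := not_subset.1 hK
  have hleave : i ∉ critical L (epref E (s + n)) := fun h =>
    hn (h.2.1 _ (mem_epref.2 ⟨n, by simp, rfl⟩))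
  obtain ⟨k, hk, hk1⟩ := Nat.exists_not_and_succ_of_not_zero_of_exists
    (p := fun k => i ∉ critical L (epref E (s + k))) (by simpa using hi) ⟨n, hleave⟩
  exact ⟨s + k, le_add_right le_rfl, not_not.1 hk, hk1⟩

theorem frequently_playedLanguage_eq (hE : range E = L z) (hD : 1 ≤ D) :
    ∃ᶠ t in atTop, ∀ s, t / D ≤ s → s ≤ t → L (playedIndex L D (epref E s)) = L z := by
  by_contra hcon
  obtain ⟨T, hT⟩ :=
    ((not_frequently.1 hcon).and (eventually_playedIndex hE hD)).exists_forall_of_atTop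
  have hjunk : ∀ v, T ≤ v → ∃ s, v ≤ s ∧ s / D ≤ v ∧ L (playedIndex L D (epref E s)) ≠ L z := by
    intro v hv
    have hDv : D * v / D = v := Nat.mul_div_cancel_left v (by omega)
    have hnot := (hT (D * v) (hv.trans (Nat.le_mul_of_pos_left v hD))).1
    push Not at hnot
    obtain ⟨s, hs1, hs2, hs⟩ := hnot
    exact ⟨s, hDv ▸ hs1, hDv ▸ Nat.div_le_div_right hs2, hs⟩
  suffices descent : ∀ i s, T ≤ s → playedIndex L D (epref E s) = i → L i ≠ L z → False by
    obtain ⟨s, hs, -, hjunk_s⟩ := hjunk T le_rfl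
    exact descent _ s hs rfl hjunk_s
  intro i
  induction i using Nat.strong_induction_on with
  | _ i ih =>
  rintro s hs rfl hjunk_s
  obtain ⟨hp, hsub⟩ := (hT s hs).2
  obtain ⟨u, hsu, hmem, hnot⟩ :=
    exists_mem_critical_not_mem_succ hp.1 fun h => hjunk_s (hsub.antisymm (hE ▸ h))
  obtain ⟨s', hs'1, hs'2, hjunk_s'⟩ := hjunk (u + 1) (by omega)
  have hchange : StatusChanges L D (epref E s') (playedIndex L D (epref E s)) :=
    statusChanges_epref_iff.2 ⟨u, hs'2, by omega, fun h => hnot (h.1 hmem)⟩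
  exact ih _ (playedIndex_lt_of_statusChanges ⟨_, (hT s' (by omega)).2.1⟩ hchange) s'
    (by omega) rfl hjunk_s'

end Enumeration

end ElementGeneration

open ElementGeneration

/-- For every `c < 1/2` there is a uniform element-based generation algorithm
(whose output at step `t` is the string `f L (epref E t)`) achieving element-based
generation in the limit on every instance, whose output set
`O(E,f) = {o_t : t} ∩ K` has upper density at least `c` in `K`. -/
theorem stmt10 (c : ℝ) (hc : c < 1 / 2) :
    ∃ f : (ℕ → Set ℕ) → List ℕ → ℕ,
      ∀ (L : ℕ → Set ℕ), (∀ i, (L i).Infinite) →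
        ∀ (z : ℕ) (E : ℕ → ℕ), IsEnum E (L z) →
          (∃ tstar : ℕ, ∀ t ≥ tstar,
              f L (epref E t) ∈ L z ∧ ∀ s ≤ t, E s ≠ f L (epref E t)) ∧
          c ≤ upperDensity ({w : ℕ | ∃ t : ℕ, f L (epref E t) = w} ∩ L z) (L z) := by
  obtain ⟨D, hD, hcD⟩ := exists_two_le_mul_two_mul_sub_one_lt hc
  refine ⟨fun L => greedyOut fun l => L (playedIndex L D l), fun L hL z E hE => ⟨?_, ?_⟩⟩
  · obtain ⟨T, hT⟩ := (eventually_playedIndex (D := D) hE.2 (by omega)).exists_forall_of_atTop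
    refine ⟨T, fun t ht => ?_⟩
    obtain ⟨hmem, hnew⟩ := greedyOut_mem_diff (fun l => L (playedIndex L D l)) E (hL _)
    exact ⟨(hT t ht).2 hmem, fun s hs h => hnew (Or.inl ⟨s, hs, h⟩)⟩
  · exact le_upperDensity_greedyOut hD hcD (hL z)
      (frequently_playedLanguage_eq hE.2 (by omega))
end

section
/- There exists a uniform element-based generation algorithm f (a function taking a countable collection X of languages and a finite sequence of strings, and returning a string) such that for every countable collection X, every K ∈ X, and every enumeration E of K: f achieves element-based generation in the limit on E, and μ_low(O(E, f), K) ≥ 1/8. -/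
/-- The lower density of `L` in the infinite set `K`:
`liminf_{N→∞} |L ∩ {k_1,…,k_N}| / N`, where `k_1 < k_2 < ⋯` lists `K` in
increasing order. -/
noncomputable def lowerDensity (L K : Set ℕ) : ℝ :=
  Filter.liminf
    (fun N : ℕ => ((Set.ncard {n : ℕ | n < N ∧ Nat.nth (· ∈ K) n ∈ L}) : ℝ) / N)
    Filter.atTop

/-!
At time `n` the generator selects the largest index `i ≤ log₂ n` that has been *critical*
(consistent with the sample and contained in every consistent language of smaller index) at every
time of the window `[log₂ n, n]`, and outputs the least element of `L i` neither revealed nor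
output before. The true index `z` is eventually critical forever, so eventually `z ≤ selected n`
and `L (selected n) ⊆ L z`: the outputs are valid.

For the density, fix `N` and let `W` count the elements of rank `< N` in `K = L z` that are ever
output. Take an element of rank `< N` that is never output, revealed at a time `τ ≥ n₀`, where
`n₀ = O(log N)` lies past the settling time of the selection. If the language selected at `τ`
contains such an element revealed at a time `≥ τ`, the output at `τ` is a smaller element of `K`;
there are at most `W` such times. Otherwise the selected index dies (turns inconsistent) by time
`τ + 1`. The window rule gives a cap lemma: an index dying after `log₂ n`
cannot lie below `selected n`. Runs of times of the first kind have length `≤ W`, so iterating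
the cap lemma produces an index `≤ log₂ (n₀ + W)` dying exactly at time `τ + 1`; this index
determines `τ`, so there are only logarithmically many such `τ`. Hence `N ≤ 2 W + O(log N)`.
-/

namespace LimitGeneration

open Filter Finset

variable (L : ℕ → Set ℕ) (E : ℕ → ℕ)

def revealed (n : ℕ) : Set ℕ := E '' Set.Iio n

def IsConsistent (i n : ℕ) : Prop := revealed E n ⊆ L i

def IsCritical (i n : ℕ) : Prop :=
  IsConsistent L E i n ∧ ∀ j < i, IsConsistent L E j n → L i ⊆ L j

def IsWindowCritical (n i : ℕ) : Prop :=
  ∀ s, Nat.log 2 n ≤ s → s ≤ n → IsCritical L E i s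

open Classical in
noncomputable def selected (n : ℕ) : ℕ :=
  Nat.findGreatest (IsWindowCritical L E n) (Nat.log 2 n)

noncomputable def output (n : ℕ) : ℕ :=
  sInf (L (selected L E n) \ (revealed E n ∪ Set.range fun m : Fin n => output m))
termination_by n

noncomputable def generator (L : ℕ → Set ℕ) (p : List ℕ) : ℕ :=
  output L (fun k => p.getD k 0) p.length

variable {L E}

lemma output_eq (n : ℕ) :
    output L E n = sInf (L (selected L E n) \ (revealed E n ∪ output L E '' Set.Iio n)) := by
  rw [output]
  congr
  ext x
  simp [Fin.exists_iff]

lemma output_mem (hinf : ∀ i, (L i).Infinite) (n : ℕ) :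
    output L E n ∈ L (selected L E n) \ (revealed E n ∪ output L E '' Set.Iio n) := by
  rw [output_eq]
  exact Nat.sInf_mem ((hinf _).sdiff (((Set.finite_Iio n).image E).union
    ((Set.finite_Iio n).image _))).nonempty

lemma output_le {n x : ℕ} (hx : x ∈ L (selected L E n))
    (hnew : x ∉ revealed E n ∪ output L E '' Set.Iio n) : output L E n ≤ x := by
  rw [output_eq]
  exact Nat.sInf_le ⟨hx, hnew⟩

lemma output_injective (hinf : ∀ i, (L i).Infinite) : Function.Injective (output L E) := by
  intro m n h
  by_contra hne
  rcases Nat.lt_or_gt_of_ne hne with hlt | hlt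
  · exact (output_mem hinf n).2 (Or.inr ⟨m, hlt, h⟩)
  · exact (output_mem hinf m).2 (Or.inr ⟨n, hlt, h.symm⟩)

lemma revealed_congr {E' : ℕ → ℕ} {n : ℕ} (h : ∀ k < n, E k = E' k) :
    revealed E n = revealed E' n :=
  Set.EqOn.image_eq fun _ hk => h _ hk

lemma selected_congr {E' : ℕ → ℕ} {n : ℕ} (h : ∀ k < n, E k = E' k) :
    selected L E n = selected L E' n := by
  have hwin : IsWindowCritical L E n = IsWindowCritical L E' n := by
    ext i
    refine forall_congr' fun s => imp_congr_right fun _ => imp_congr_right fun hs => ?_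
    simp only [IsCritical, IsConsistent,
      revealed_congr fun k hk => h k (lt_of_lt_of_le hk hs)]
  unfold selected
  congr

lemma output_congr {E' : ℕ → ℕ} (n : ℕ) (h : ∀ k < n, E k = E' k) :
    output L E n = output L E' n := by
  induction n using Nat.strong_induction_on with
  | _ n ih =>
    have hprev : output L E '' Set.Iio n = output L E' '' Set.Iio n :=
      Set.EqOn.image_eq fun m hm => ih m hm fun k hk => h k (hk.trans hm)
    rw [output_eq, output_eq, selected_congr h, revealed_congr h, hprev]

lemma generator_epref (t : ℕ) : generator L (epref E t) = output L E (t + 1) := by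
  rw [generator, epref, List.length_map, List.length_range]
  exact output_congr _ fun k hk => by simp [hk]

lemma mem_revealed {s n : ℕ} (h : s < n) : E s ∈ revealed E n := ⟨s, h, rfl⟩

lemma apply_notMem_revealed (hE : Function.Injective E) {s n : ℕ} (h : n ≤ s) :
    E s ∉ revealed E n := by
  rintro ⟨k, hk, hks⟩
  exact absurd (hE hks) (ne_of_lt (lt_of_lt_of_le hk h))

lemma isConsistent_zero (i : ℕ) : IsConsistent L E i 0 := by
  simp [IsConsistent, revealed]

lemma IsConsistent.anti {i m n : ℕ} (hmn : m ≤ n) (h : IsConsistent L E i n) :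
    IsConsistent L E i m :=
  (Set.image_mono (Set.Iio_subset_Iio hmn)).trans h

lemma selected_le_log (n : ℕ) : selected L E n ≤ Nat.log 2 n := by
  classical
  exact Nat.findGreatest_le _

lemma le_selected {n i : ℕ} (hi : i ≤ Nat.log 2 n) (h : IsWindowCritical L E n i) :
    i ≤ selected L E n ∧ IsWindowCritical L E n (selected L E n) := by
  classical
  exact ⟨Nat.le_findGreatest hi h, Nat.findGreatest_spec hi h⟩

-- `0` for an index that never becomes inconsistent.
variable (L E) in
noncomputable def deathTime (i : ℕ) : ℕ := sInf {n | ¬ IsConsistent L E i n}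

lemma isConsistent_iff_lt_deathTime {i n₀ : ℕ} (hdead : ¬ IsConsistent L E i n₀) (n : ℕ) :
    IsConsistent L E i n ↔ n < deathTime L E i := by
  have hne : {n | ¬ IsConsistent L E i n}.Nonempty := ⟨n₀, hdead⟩
  constructor
  · intro h
    by_contra hle
    exact Nat.sInf_mem hne (h.anti (not_lt.1 hle))
  · intro h
    by_contra hn
    exact absurd (Nat.sInf_le hn) (not_le.2 h)

/-- Cap lemma: were `p < selected n`, criticality of `selected n` at time `deathTime p - 1`,
which lies in the window, would give `L (selected n) ⊆ L p`. -/
lemma selected_lt_of_not_isConsistent {n p : ℕ}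
    (hsel : IsWindowCritical L E n (selected L E n)) (hdead : ¬ IsConsistent L E p n)
    (hlog : Nat.log 2 n < deathTime L E p) : selected L E n < p := by
  have hcons := isConsistent_iff_lt_deathTime hdead
  have hsel_cons : IsConsistent L E (selected L E n) n := (hsel n (Nat.log_le_self 2 n) le_rfl).1
  rcases lt_trichotomy (selected L E n) p with hlt | heq | hgt
  · exact hlt
  · exact absurd (heq ▸ hsel_cons) hdead
  · have hdn : deathTime L E p ≤ n := not_lt.1 ((hcons n).not.1 hdead)
    have hpos : 0 < deathTime L E p := (hcons 0).1 (isConsistent_zero p)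
    have hsub : L (selected L E n) ⊆ L p :=
      (hsel (deathTime L E p - 1) (by omega) (by omega)).2 p hgt ((hcons _).2 (by omega))
    exact absurd (hsel_cons.trans hsub) hdead

variable {z : ℕ}

lemma isConsistent_of_range_eq (hE : Set.range E = L z) (n : ℕ) : IsConsistent L E z n := by
  rintro _ ⟨s, -, rfl⟩
  exact hE ▸ Set.mem_range_self s

lemma eventually_isCritical (hE : Set.range E = L z) : ∀ᶠ n in atTop, IsCritical L E z n := by
  have hsmaller : ∀ j ∈ Finset.range z, ∀ᶠ n in atTop, IsConsistent L E j n → L z ⊆ L j := by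
    intro j _
    by_cases hzj : L z ⊆ L j
    · exact Eventually.of_forall fun _ _ => hzj
    · obtain ⟨x, hxz, hxj⟩ := Set.not_subset.1 hzj
      obtain ⟨s, rfl⟩ : x ∈ Set.range E := hE ▸ hxz
      filter_upwards [eventually_gt_atTop s] with n hn hjn
      exact absurd (hjn (mem_revealed hn)) hxj
  filter_upwards [(Filter.eventually_all_finset _).2 hsmaller] with n hn
  exact ⟨isConsistent_of_range_eq hE n, fun j hj => hn j (Finset.mem_range.2 hj)⟩

lemma eventually_le_selected (hE : Set.range E = L z) :
    ∀ᶠ n in atTop, z ≤ selected L E n ∧ IsWindowCritical L E n (selected L E n) := by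
  obtain ⟨T, hT⟩ := eventually_atTop.1 (eventually_isCritical hE)
  filter_upwards [eventually_ge_atTop (2 ^ max T z)] with n hn
  have hlog : max T z ≤ Nat.log 2 n := Nat.le_log_of_pow_le one_lt_two hn
  exact le_selected (le_of_max_le_right hlog) fun s hs _ => hT s (by omega)

lemma selected_subset (hE : Set.range E = L z) {n : ℕ} (hz : z ≤ selected L E n)
    (hsel : IsWindowCritical L E n (selected L E n)) : L (selected L E n) ⊆ L z := by
  rcases hz.eq_or_lt with heq | hlt
  · rw [← heq]
  · exact (hsel n (Nat.log_le_self 2 n) le_rfl).2 z hlt (isConsistent_of_range_eq hE n)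

lemma exists_generator_valid (hinf : ∀ i, (L i).Infinite) (hE : Set.range E = L z) :
    ∃ t₀, ∀ t ≥ t₀,
      generator L (epref E t) ∈ L z ∧ ∀ s ≤ t, E s ≠ generator L (epref E t) := by
  obtain ⟨n₁, hn₁⟩ := eventually_atTop.1 (eventually_le_selected hE)
  refine ⟨n₁, fun t ht => ?_⟩
  obtain ⟨hz, hsel⟩ := hn₁ (t + 1) (by omega)
  obtain ⟨hmem, hnew⟩ := output_mem hinf (t + 1)
  rw [generator_epref]
  exact ⟨selected_subset hE hz hsel hmem,
    fun s hs heq => hnew (Or.inl (heq ▸ mem_revealed (Nat.lt_succ_of_le hs)))⟩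

section Chain

variable (L E) (U : Finset ℕ) (n₀ : ℕ)

def SelectsLater (n : ℕ) : Prop := ∃ τ ∈ U, n ≤ τ ∧ E τ ∈ L (selected L E n)

-- `SelectsLater n` forces `n ≤ U.sup id`: the interval only makes the set finite.
open Classical in
noncomputable def selectingLaterSteps : Finset ℕ :=
  (Finset.Icc n₀ (U.sup id)).filter (SelectsLater L E U)

variable {L E U n₀}

lemma exists_not_selectsLater_le {d τ : ℕ} (hd : n₀ ≤ d) (hτ : τ ∈ U) (hdτ : d ≤ τ)
    (hτA : ¬ SelectsLater L E U τ) :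
    ∃ m, d ≤ m ∧ m ≤ τ ∧ m ≤ d + #(selectingLaterSteps L E U n₀) ∧ ¬ SelectsLater L E U m := by
  classical
  have hex : ∃ k, ¬ SelectsLater L E U (d + k) := ⟨τ - d, by rwa [Nat.add_sub_cancel' hdτ]⟩
  have hk : Nat.find hex ≤ τ - d := Nat.find_min' hex (by rwa [Nat.add_sub_cancel' hdτ])
  have hrun : Finset.Ico d (d + Nat.find hex) ⊆ selectingLaterSteps L E U n₀ := by
    intro n hn
    obtain ⟨hdn, hnd⟩ := Finset.mem_Ico.1 hn
    simp only [selectingLaterSteps, Finset.mem_filter, Finset.mem_Icc]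
    refine ⟨⟨by omega, (show n ≤ τ by omega).trans (Finset.le_sup (f := id) hτ)⟩, ?_⟩
    simpa [Nat.add_sub_cancel' hdn] using Nat.find_min hex (show n - d < Nat.find hex by omega)
  have hcard := Finset.card_le_card hrun
  rw [Nat.card_Ico, Nat.add_sub_cancel_left] at hcard
  exact ⟨d + Nat.find hex, by omega, by omega, by omega, Nat.find_spec hex⟩

variable (hcrit : ∀ n ≥ n₀, IsWindowCritical L E n (selected L E n))
include hcrit

lemma deathTime_selected_bounds {m τ : ℕ} (hm : n₀ ≤ m) (hτ : τ ∈ U) (hmτ : m ≤ τ)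
    (hmA : ¬ SelectsLater L E U m) :
    ¬ IsConsistent L E (selected L E m) (τ + 1) ∧
      m < deathTime L E (selected L E m) ∧ deathTime L E (selected L E m) ≤ τ + 1 := by
  have hdead : ¬ IsConsistent L E (selected L E m) (τ + 1) :=
    fun h => hmA ⟨τ, hτ, hmτ, h (mem_revealed (Nat.lt_succ_self τ))⟩
  have hcons := isConsistent_iff_lt_deathTime hdead
  exact ⟨hdead, (hcons m).1 (hcrit m hm m (Nat.log_le_self 2 m) le_rfl).1,
    not_lt.1 ((hcons _).not.1 hdead)⟩

lemma exists_deathTime_eq (hpow : ∀ d ≥ n₀, d + #(selectingLaterSteps L E U n₀) < 2 ^ d)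
    {τ : ℕ} (hτ : τ ∈ U) (hτA : ¬ SelectsLater L E U τ) {m : ℕ} (hm : n₀ ≤ m) (hmτ : m ≤ τ)
    (hmA : ¬ SelectsLater L E U m) :
    ∃ y ≤ selected L E m, deathTime L E y = τ + 1 := by
  -- If `selected m` dies before `τ + 1`, the next non-selecting step `m₁` comes before
  -- `2 ^ deathTime`, so the cap lemma makes `selected m₁` smaller.
  induction hsel : selected L E m using Nat.strong_induction_on generalizing m with
  | _ p ih =>
    obtain ⟨hdead, hmd, hdτ⟩ := deathTime_selected_bounds hcrit hm hτ hmτ hmA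
    rw [hsel] at hdead hmd hdτ
    rcases hdτ.eq_or_lt with heq | hlt
    · exact ⟨p, le_rfl, heq⟩
    obtain ⟨m₁, hdm₁, hm₁τ, hm₁pow, hm₁A⟩ :=
      exists_not_selectsLater_le (n₀ := n₀) (d := deathTime L E p) (by omega) hτ (by omega) hτA
    have hlog : Nat.log 2 m₁ < deathTime L E p :=
      Nat.log_lt_of_lt_pow (by omega) (lt_of_le_of_lt hm₁pow (hpow _ (by omega)))
    have hdead₁ : ¬ IsConsistent L E p m₁ :=
      fun h => absurd ((isConsistent_iff_lt_deathTime hdead m₁).1 h) (not_lt.2 hdm₁)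
    have hlt₁ : selected L E m₁ < p :=
      selected_lt_of_not_isConsistent (hcrit m₁ (by omega)) hdead₁ hlog
    obtain ⟨y, hy, hyτ⟩ := ih _ hlt₁ (by omega) hm₁τ hm₁A rfl
    exact ⟨y, hy.trans hlt₁.le, hyτ⟩

lemma card_le_selectingLaterSteps_add_log (hU : ∀ τ ∈ U, n₀ ≤ τ)
    (hpow : ∀ d ≥ n₀, d + #(selectingLaterSteps L E U n₀) < 2 ^ d) :
    #U ≤ #(selectingLaterSteps L E U n₀) +
      (Nat.log 2 (n₀ + #(selectingLaterSteps L E U n₀)) + 1) := by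
  classical
  set A := #(selectingLaterSteps L E U n₀)
  have hdeath : ∀ τ ∈ U.filter (¬ SelectsLater L E U ·),
      ∃ y, y ∈ Finset.range (Nat.log 2 (n₀ + A) + 1) ∧ deathTime L E y = τ + 1 := by
    intro τ hτ
    obtain ⟨hτU, hτA⟩ := Finset.mem_filter.1 hτ
    obtain ⟨m, hm, hmτ, hmA, hmS⟩ := exists_not_selectsLater_le le_rfl hτU (hU τ hτU) hτA
    obtain ⟨y, hy, hyτ⟩ := exists_deathTime_eq hcrit hpow hτU hτA hm hmτ hmS
    refine ⟨y, Finset.mem_range.2 (Nat.lt_succ_of_le ?_), hyτ⟩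
    exact hy.trans ((selected_le_log m).trans (Nat.log_mono_right hmA))
  choose! y hy hyτ using hdeath
  -- `τ ↦ y τ` is injective since `deathTime (y τ) = τ + 1`.
  have hnot : #(U.filter (¬ SelectsLater L E U ·)) ≤ Nat.log 2 (n₀ + A) + 1 := by
    simpa using Finset.card_le_card_of_injOn y (fun τ hτ => hy τ hτ)
      fun τ hτ τ' hτ' h => by simpa [hyτ τ hτ, hyτ τ' hτ'] using congrArg (deathTime L E) h
  have hyes : U.filter (SelectsLater L E U) ⊆ selectingLaterSteps L E U n₀ := by
    intro τ hτ
    obtain ⟨hτU, hτA⟩ := Finset.mem_filter.1 hτ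
    exact Finset.mem_filter.2 ⟨Finset.mem_Icc.2 ⟨hU τ hτU, Finset.le_sup (f := id) hτU⟩, hτA⟩
  rw [← Finset.card_filter_add_card_filter_not (SelectsLater L E U)]
  exact add_le_add (Finset.card_le_card hyes) hnot

end Chain

lemma add_lt_two_pow {a N d : ℕ} (ha : a ≤ N) (hd : Nat.log 2 N + 2 ≤ d) : d + a < 2 ^ d := by
  have hN : N < 2 ^ (Nat.log 2 N + 1) := Nat.lt_pow_succ_log_self one_lt_two N
  have hmono : 2 ^ (Nat.log 2 N + 1) ≤ 2 ^ (d - 1) := Nat.pow_le_pow_right two_pos (by omega)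
  have hd' : d - 1 < 2 ^ (d - 1) := Nat.lt_two_pow_self
  have hdouble : 2 ^ d = 2 ^ (d - 1) + 2 ^ (d - 1) := by
    rw [← two_mul, ← pow_succ', Nat.sub_add_cancel (by omega)]
  omega

lemma sixteen_mul_log_le {N : ℕ} (hN : 128 ≤ N) : 16 * Nat.log 2 N ≤ N := by
  have hk : 7 ≤ Nat.log 2 N := Nat.le_log_of_pow_le one_lt_two hN
  have hpow : ∀ k ≥ 7, 16 * k ≤ 2 ^ k := by
    intro k hk
    induction k, hk using Nat.le_induction with
    | base => norm_num
    | succ k _ ih => rw [pow_succ]; omega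
  exact (hpow _ hk).trans (Nat.pow_log_le_self 2 (by omega))

section Counting

variable (L E z)

open Classical in
noncomputable def outputRanks (N : ℕ) : Finset ℕ :=
  (Finset.range N).filter fun m => Nat.nth (· ∈ L z) m ∈ Set.range (output L E)

-- `Function.invFun E x` is the time at which `x` is revealed.
open Classical in
noncomputable def missedTimes (N n₀ : ℕ) : Finset ℕ :=
  (((Finset.range N).filter fun m => Nat.nth (· ∈ L z) m ∉ Set.range (output L E)).image
    fun m => Function.invFun E (Nat.nth (· ∈ L z) m)).filter (n₀ ≤ ·)

variable {L E z}

lemma card_outputRanks_le (N : ℕ) : #(outputRanks L E z N) ≤ N := by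
  classical
  rw [outputRanks]
  exact (Finset.card_filter_le _ _).trans (Finset.card_range N).le

variable (hinf : ∀ i, (L i).Infinite) (hE : Set.range E = L z)
include hinf hE

lemma apply_invFun_nth (m : ℕ) :
    E (Function.invFun E (Nat.nth (· ∈ L z) m)) = Nat.nth (· ∈ L z) m :=
  Function.invFun_eq (hE ▸ Nat.nth_mem_of_infinite (hinf z) m)

lemma le_card_outputRanks_add_missedTimes (N n₀ : ℕ) :
    N ≤ #(outputRanks L E z N) + (n₀ + #(missedTimes L E z N n₀)) := by
  classical
  set r := fun m => Function.invFun E (Nat.nth (· ∈ L z) m)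
  have hr : ∀ m, E (r m) = Nat.nth (· ∈ L z) m := apply_invFun_nth hinf hE
  have hrinj : Function.Injective r := fun m m' h =>
    Nat.nth_injective (p := (· ∈ L z)) (hinf z) (by rw [← hr, h, hr])
  set missed := (Finset.range N).filter fun m => Nat.nth (· ∈ L z) m ∉ Set.range (output L E)
  have himage : missed.image r ⊆ Finset.range n₀ ∪ missedTimes L E z N n₀ := by
    intro τ hτ
    by_cases hτn : τ < n₀
    · exact Finset.mem_union_left _ (Finset.mem_range.2 hτn)
    · exact Finset.mem_union_right _ (Finset.mem_filter.2 ⟨hτ, not_lt.1 hτn⟩)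
  have hsplit : #(outputRanks L E z N) + #missed = N := by
    rw [outputRanks, Finset.card_filter_add_card_filter_not, Finset.card_range]
  calc N = #(outputRanks L E z N) + #(missed.image r) := by
        rw [Finset.card_image_of_injective _ hrinj, hsplit]
    _ ≤ #(outputRanks L E z N) + (n₀ + #(missedTimes L E z N n₀)) := by
        gcongr
        exact (Finset.card_le_card himage).trans ((Finset.card_union_le _ _).trans (by simp))

lemma card_selectingLaterSteps_le (hinj : Function.Injective E) {N n₀ : ℕ}
    (hgood : ∀ n ≥ n₀, z ≤ selected L E n ∧ IsWindowCritical L E n (selected L E n)) :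
    #(selectingLaterSteps L E (missedTimes L E z N n₀) n₀) ≤ #(outputRanks L E z N) := by
  classical
  have hrank : ∀ n ∈ selectingLaterSteps L E (missedTimes L E z N n₀) n₀,
      output L E n ∈ L z ∧ Nat.count (· ∈ L z) (output L E n) < N := by
    intro n hn
    simp only [selectingLaterSteps, Finset.mem_filter, Finset.mem_Icc] at hn
    obtain ⟨⟨hn₀, -⟩, τ, hτ, hnτ, hτsel⟩ := hn
    simp only [missedTimes, Finset.mem_filter, Finset.mem_image, Finset.mem_range] at hτ
    obtain ⟨⟨m, ⟨hmN, hmiss⟩, rfl⟩, -⟩ := hτ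
    rw [apply_invFun_nth hinf hE] at hτsel
    have hK : output L E n ∈ L z :=
      selected_subset hE (hgood n hn₀).1 (hgood n hn₀).2 (output_mem hinf n).1
    have hle : output L E n ≤ Nat.nth (· ∈ L z) m := by
      refine output_le hτsel ?_
      rintro (hrev | ⟨k, -, hk⟩)
      · rw [← apply_invFun_nth hinf hE m] at hrev
        exact apply_notMem_revealed hinj hnτ hrev
      · exact hmiss ⟨k, hk⟩
    have hlt : output L E n < Nat.nth (· ∈ L z) m :=
      hle.lt_of_ne fun h => hmiss ⟨n, h⟩
    refine ⟨hK, ?_⟩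
    calc Nat.count (· ∈ L z) (output L E n) < Nat.count (· ∈ L z) (Nat.nth (· ∈ L z) m) :=
          Nat.count_strict_mono hK hlt
      _ = m := Nat.count_nth_of_infinite (p := (· ∈ L z)) (hinf z) m
      _ < N := hmN
  refine Finset.card_le_card_of_injOn (fun n => Nat.count (· ∈ L z) (output L E n)) ?_ ?_
  · intro n hn
    obtain ⟨hK, hN⟩ := hrank n hn
    simp only [outputRanks, Finset.mem_coe, Finset.mem_filter, Finset.mem_range]
    exact ⟨hN, n, (Nat.nth_count hK).symm⟩
  · intro n hn n' hn' h
    have := congrArg (Nat.nth (· ∈ L z)) h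
    simp only [Nat.nth_count (hrank n hn).1, Nat.nth_count (hrank n' hn').1] at this
    exact output_injective hinf this

lemma le_two_mul_card_outputRanks (hinj : Function.Injective E) {n₁ : ℕ}
    (hgood : ∀ n ≥ n₁, z ≤ selected L E n ∧ IsWindowCritical L E n (selected L E n)) (N : ℕ) :
    N ≤ 2 * #(outputRanks L E z N) + max n₁ (Nat.log 2 N + 2) +
      Nat.log 2 (max n₁ (Nat.log 2 N + 2) + #(outputRanks L E z N)) + 1 := by
  set n₀ := max n₁ (Nat.log 2 N + 2)
  set W := #(outputRanks L E z N)
  have hAW : #(selectingLaterSteps L E (missedTimes L E z N n₀) n₀) ≤ W :=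
    card_selectingLaterSteps_le hinf hE hinj fun n hn => hgood n (le_of_max_le_left hn)
  have hWN : W ≤ N := card_outputRanks_le N
  have hmissed := card_le_selectingLaterSteps_add_log (U := missedTimes L E z N n₀) (n₀ := n₀)
    (fun n hn => (hgood n (le_of_max_le_left hn)).2)
    (fun τ hτ => (Finset.mem_filter.1 hτ).2)
    (fun d hd => add_lt_two_pow (hAW.trans hWN) (le_of_max_le_right hd))
  have hlog := Nat.log_mono_right (b := 2) (Nat.add_le_add_left hAW n₀)
  have hcount := le_card_outputRanks_add_missedTimes hinf hE N n₀
  omega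

end Counting

lemma one_div_le_lowerDensity {S K : Set ℕ} {k : ℕ} (hk : 0 < k)
    (h : ∀ᶠ N in atTop, N ≤ k * Set.ncard {n | n < N ∧ Nat.nth (· ∈ K) n ∈ S}) :
    1 / (k : ℝ) ≤ lowerDensity S K := by
  refine le_liminf_of_le (isCoboundedUnder_ge_of_le atTop (x := 1) fun N => ?_) ?_
  · rcases N.eq_zero_or_pos with rfl | hN
    · simp
    · rw [div_le_one (by exact_mod_cast hN)]
      have hsub : {n | n < N ∧ Nat.nth (· ∈ K) n ∈ S} ⊆ Set.Iio N := fun n hn => hn.1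
      exact_mod_cast (Set.ncard_le_ncard hsub (Set.finite_Iio N)).trans (Set.ncard_Iio_nat N).le
  · filter_upwards [h, eventually_gt_atTop 0] with N hN hpos
    rw [div_le_div_iff₀ (by exact_mod_cast hk) (by exact_mod_cast hpos), one_mul, mul_comm]
    exact_mod_cast hN

lemma card_outputRanks_le_ncard (hinf : ∀ i, (L i).Infinite) (N : ℕ) :
    #(outputRanks L E z N) ≤ Set.ncard {m | m < N ∧
      Nat.nth (· ∈ L z) m ∈ {w | ∃ t, generator L (epref E t) = w} ∩ L z} + 1 := by
  classical
  set S := {m | m < N ∧ Nat.nth (· ∈ L z) m ∈ {w | ∃ t, generator L (epref E t) = w} ∩ L z}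
  -- `output L E 0` is the only output that the generator never produces.
  have hsub : ↑(outputRanks L E z N) ⊆ S ∪ {Nat.count (· ∈ L z) (output L E 0)} := by
    intro m hm
    simp only [outputRanks, Finset.coe_filter, Finset.mem_range] at hm
    obtain ⟨hmN, n, hn⟩ := hm
    cases n with
    | zero =>
      right
      rw [Set.mem_singleton_iff, hn, Nat.count_nth_of_infinite (p := (· ∈ L z)) (hinf z)]
    | succ t =>
      left
      exact ⟨hmN, ⟨t, by rw [generator_epref, hn]⟩,
        Nat.nth_mem_of_infinite (p := (· ∈ L z)) (hinf z) m⟩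
  have hfin : (S ∪ {Nat.count (· ∈ L z) (output L E 0)}).Finite :=
    ((Set.finite_Iio N).subset fun m hm => hm.1).union (Set.finite_singleton _)
  calc #(outputRanks L E z N) = (↑(outputRanks L E z N) : Set ℕ).ncard :=
        (Set.ncard_coe_finset _).symm
    _ ≤ (S ∪ {Nat.count (· ∈ L z) (output L E 0)}).ncard := Set.ncard_le_ncard hsub hfin
    _ ≤ S.ncard + 1 := (Set.ncard_union_le _ _).trans (by rw [Set.ncard_singleton])

lemma eventually_le_eight_mul_ncard (hinf : ∀ i, (L i).Infinite) (hE : IsEnum E (L z)) :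
    ∀ᶠ N in atTop, N ≤ 8 * Set.ncard {m | m < N ∧
      Nat.nth (· ∈ L z) m ∈ {w | ∃ t, generator L (epref E t) = w} ∩ L z} := by
  obtain ⟨n₁, hn₁⟩ := eventually_atTop.1 (eventually_le_selected hE.2)
  filter_upwards [eventually_ge_atTop (2 * n₁ + 128)] with N hN
  have hmain := le_two_mul_card_outputRanks hinf hE.2 hE.1 hn₁ N
  have hP := card_outputRanks_le_ncard (E := E) (z := z) hinf N
  set W := #(outputRanks L E z N)
  set n₀ := max n₁ (Nat.log 2 N + 2)
  have hWN : W ≤ N := card_outputRanks_le N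
  have hn₀ : n₀ ≤ n₁ + Nat.log 2 N + 2 := max_le (by omega) (by omega)
  have hlogN : 16 * Nat.log 2 N ≤ N := sixteen_mul_log_le (by omega)
  have hlog : Nat.log 2 (n₀ + W) ≤ Nat.log 2 N + 2 := by
    have hpow : N < 2 ^ (Nat.log 2 N + 1) := Nat.lt_pow_succ_log_self one_lt_two N
    refine Nat.lt_succ_iff.1 (Nat.log_lt_of_lt_pow (by omega) ?_)
    rw [pow_succ, pow_succ]
    omega
  omega

end LimitGeneration

/-- There is a uniform element-based generation algorithm achieving element-based
generation in the limit on every instance, whose output set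
`O(E,f) = {o_t : t} ∩ K` has lower density at least `1/8` in `K`. -/
theorem stmt11 :
    ∃ f : (ℕ → Set ℕ) → List ℕ → ℕ,
      ∀ (L : ℕ → Set ℕ), (∀ i, (L i).Infinite) →
        ∀ (z : ℕ) (E : ℕ → ℕ), IsEnum E (L z) →
          (∃ tstar : ℕ, ∀ t ≥ tstar,
              f L (epref E t) ∈ L z ∧ ∀ s ≤ t, E s ≠ f L (epref E t)) ∧
          (1 / 8 : ℝ) ≤
            lowerDensity ({w : ℕ | ∃ t : ℕ, f L (epref E t) = w} ∩ L z) (L z) := by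
  refine ⟨LimitGeneration.generator, fun L hinf z E hE =>
    ⟨LimitGeneration.exists_generator_valid hinf hE.2, ?_⟩⟩
  exact_mod_cast LimitGeneration.one_div_le_lowerDensity (by norm_num)
    (LimitGeneration.eventually_le_eight_mul_ncard hinf hE)
end

section
/- Let X be a countable collection of languages with topology T. A language L' ∈ X is a limit point of X in (X, T) if and only if there exists an infinite perfect tower of pairwise distinct languages from X with terminal language L'. -/
/-- The topology on a collection `𝒳` of languages, generated by the basic open
sets `U_{M,F} = {A ∈ 𝒳 : F ⊆ A ⊆ M}` for `M ∈ 𝒳` and `F ⊆ ℕ` finite. -/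
def XTop (𝒳 : Set (Set ℕ)) : TopologicalSpace ↥𝒳 :=
  TopologicalSpace.generateFrom
    {U : Set ↥𝒳 | ∃ M ∈ 𝒳, ∃ F : Finset ℕ,
      U = {A : ↥𝒳 | ↑F ⊆ (A : Set ℕ) ∧ (A : Set ℕ) ⊆ M}}

/-- The derived set of `Y ⊆ 𝒳`: the set of limit points of `Y` in `(𝒳, T)`,
i.e. points every open neighborhood of which contains a member of `Y` different
from the point itself (accumulation points of `Y`). -/
def derivSet (𝒳 : Set (Set ℕ)) (Y : Set ↥𝒳) : Set ↥𝒳 :=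
  {x | @AccPt _ (XTop 𝒳) x (Filter.principal Y)}

/-- The Cantor–Bendixson derivatives `𝒳^(i)` of the collection `𝒳`:
`𝒳^(0) = 𝒳` and `𝒳^(i+1) = d(𝒳^(i))`. -/
def cbDeriv (𝒳 : Set (Set ℕ)) : ℕ → Set ↥𝒳
  | 0 => Set.univ
  | i + 1 => derivSet 𝒳 (cbDeriv 𝒳 i)

/-!
A neighbourhood basis of `L'` is given by the sets `{A : F ⊆ A ⊆ L'}` with `F ⊆ L'` finite, so
`L'` is a limit point exactly when every finite `F ⊆ L'` lies in some `A ⊊ L'` of the collection.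
Given a tower, a finite `F ⊆ L' = ⋃ B_j` lies in `Λ_j` for all large `j`, and `Λ_j ⊊ L'`.
Conversely, enumerate `L' = {e 0, e 1, …}` and choose `Λ_n ⊊ L'` containing `e 0, …, e n` and
witnesses `x_m ∈ L' \ Λ_m` for all `m < n`; then `x_n ∈ B_{n+1}`, and every `e k` eventually
stays in the `Λ_i`, so their `B`-sets exhaust `L'`.
-/

open Filter

section Tower

variable {Λ : ℕ → Set ℕ} {K : Set ℕ}

lemma towerB_subset (k : ℕ) : towerB Λ k ⊆ {w | ∀ i, k ≤ i → w ∈ Λ i} := by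
  rw [towerB]
  exact Set.sdiff_subset

lemma mem_iUnion_towerB_iff {w : ℕ} : w ∈ ⋃ j, towerB Λ j ↔ ∀ᶠ i in atTop, w ∈ Λ i := by
  classical
  rw [eventually_atTop, Set.mem_iUnion]
  constructor
  · rintro ⟨j, hj⟩
    exact ⟨j, towerB_subset j hj⟩
  · intro h
    refine ⟨Nat.find h, ?_⟩
    rw [towerB]
    refine ⟨Nat.find_spec h, ?_⟩
    rintro ⟨m, hm, hwm⟩
    exact Nat.find_min h hm (towerB_subset m hwm)

lemma IsPerfectTower.exists_finset_subset (hT : IsPerfectTower Λ K) {F : Finset ℕ}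
    (hF : ↑F ⊆ K) : ∃ j, ↑F ⊆ Λ j := by
  have hev : ∀ w ∈ F, ∀ᶠ i in atTop, w ∈ Λ i := fun w hw =>
    mem_iUnion_towerB_iff.1 (hT.complete ▸ hF hw)
  exact ((eventually_all_finset F).2 hev).exists

lemma isPerfectTower_of_witnesses (x : ℕ → ℕ) (hinf : ∀ j, (Λ j).Infinite)
    (hsub : ∀ j, Λ j ⊆ K) (hx : ∀ n, x n ∉ Λ n) (hx_later : ∀ n i, n < i → x n ∈ Λ i)
    (hcore : (⋂ i, Λ i).Nonempty) (hK : ∀ w ∈ K, ∀ᶠ i in atTop, w ∈ Λ i) :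
    IsPerfectTower Λ K where
  injective a b hab := by
    by_contra hne
    rcases Nat.lt_or_gt_of_ne hne with h | h
    · exact hx a (hab ▸ hx_later a b h)
    · exact hx b (hab ▸ hx_later b a h)
  infinite := hinf
  proper j := (hsub j).ssubset_of_not_subset fun h =>
    hx j (h (hsub _ (hx_later j _ j.lt_succ_self)))
  nonempty
    | 0 => by
      obtain ⟨w, hw⟩ := hcore
      refine ⟨w, ?_⟩
      rw [towerB]
      exact ⟨fun i _ => Set.mem_iInter.1 hw i, fun ⟨m, hm, _⟩ => Nat.not_lt_zero m hm⟩
    | n + 1 => by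
      refine ⟨x n, ?_⟩
      rw [towerB]
      exact ⟨fun i hi => hx_later n i hi,
        fun ⟨m, hm, hxm⟩ => hx n (towerB_subset m hxm n (Nat.lt_succ_iff.1 hm))⟩
  complete := by
    ext w
    rw [mem_iUnion_towerB_iff]
    exact ⟨fun h => hsub _ h.exists.choose_spec, hK w⟩

end Tower

def approxSeq (e : ℕ → ℕ) (next : Finset ℕ → ℕ) : ℕ → Finset ℕ
  | 0 => {e 0}
  | n + 1 => insert (e (n + 1)) (insert (next (approxSeq e next n)) (approxSeq e next n))

section ApproxSeq

variable (e : ℕ → ℕ) (next : Finset ℕ → ℕ)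

lemma monotone_approxSeq : Monotone (approxSeq e next) :=
  monotone_nat_of_le_succ fun _ =>
    (Finset.subset_insert _ _).trans (Finset.subset_insert _ _)

lemma apply_mem_approxSeq (k : ℕ) : e k ∈ approxSeq e next k := by
  cases k with
  | zero => exact Finset.mem_singleton_self _
  | succ k => exact Finset.mem_insert_self _ _

lemma next_mem_approxSeq_succ (n : ℕ) : next (approxSeq e next n) ∈ approxSeq e next (n + 1) :=
  Finset.mem_insert_of_mem (Finset.mem_insert_self _ _)

lemma coe_approxSeq_subset {K : Set ℕ} (he : ∀ k, e k ∈ K)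
    (hnext : ∀ F : Finset ℕ, ↑F ⊆ K → next F ∈ K) (n : ℕ) : ↑(approxSeq e next n) ⊆ K := by
  induction n with
  | zero => simpa [approxSeq] using he 0
  | succ n ih =>
    simp only [approxSeq, Finset.coe_insert, Set.insert_subset_iff]
    exact ⟨he _, hnext _ ih, ih⟩

end ApproxSeq

lemma exists_perfectTower_of_forall_finset {S : Set (Set ℕ)} {K : Set ℕ}
    (hS : ∀ A ∈ S, A.Infinite)
    (H : ∀ F : Finset ℕ, ↑F ⊆ K → ∃ A ∈ S, A ≠ K ∧ ↑F ⊆ A ∧ A ⊆ K) :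
    ∃ Λ : ℕ → Set ℕ, (∀ j, Λ j ∈ S) ∧ IsPerfectTower Λ K := by
  choose! A hAS hAK hFA hAsub using H
  have hgap : ∀ F : Finset ℕ, ↑F ⊆ K → ∃ w ∈ K, w ∉ A F := fun F hF =>
    Set.exists_of_ssubset ((hAsub F hF).ssubset_of_ne (hAK F hF))
  choose! next hnextK hnextA using hgap
  obtain ⟨e, rfl⟩ := K.to_countable.exists_eq_range ⟨_, hnextK ∅ (by simp)⟩
  set F := approxSeq e next
  have hFK : ∀ n, ↑(F n) ⊆ Set.range e :=
    coe_approxSeq_subset e next (Set.mem_range_self ·) hnextK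
  have hstays : ∀ {w k}, w ∈ F k → ∀ i, k ≤ i → w ∈ A (F i) := fun hw i hki =>
    hFA _ (hFK i) (monotone_approxSeq e next hki hw)
  refine ⟨fun n => A (F n), fun n => hAS _ (hFK n), ?_⟩
  refine isPerfectTower_of_witnesses (fun n => next (F n))
    (fun n => hS _ (hAS _ (hFK n))) (fun n => hAsub _ (hFK n))
    (fun n => hnextA _ (hFK n))
    (fun n i hni => hstays (next_mem_approxSeq_succ e next n) i hni)
    ⟨e 0, Set.mem_iInter.2 fun i => hstays (apply_mem_approxSeq e next 0) i i.zero_le⟩ ?_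
  rintro _ ⟨k, rfl⟩
  exact eventually_atTop.2 ⟨k, hstays (apply_mem_approxSeq e next k)⟩

section Topology

variable (𝒳 : Set (Set ℕ))

lemma exists_finset_subset_of_generateOpen {U : Set ↥𝒳}
    (hU : TopologicalSpace.GenerateOpen {U : Set ↥𝒳 | ∃ M ∈ 𝒳, ∃ F : Finset ℕ,
      U = {A : ↥𝒳 | ↑F ⊆ (A : Set ℕ) ∧ (A : Set ℕ) ⊆ M}} U) {x : ↥𝒳} (hx : x ∈ U) :
    ∃ F : Finset ℕ, ↑F ⊆ (x : Set ℕ) ∧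
      {A : ↥𝒳 | ↑F ⊆ (A : Set ℕ) ∧ (A : Set ℕ) ⊆ x} ⊆ U := by
  induction hU with
  | basic V hV =>
    obtain ⟨M, -, F, rfl⟩ := hV
    exact ⟨F, hx.1, fun A hA => ⟨hA.1, hA.2.trans hx.2⟩⟩
  | univ => exact ⟨∅, by simp, Set.subset_univ _⟩
  | inter V W _ _ ihV ihW =>
    obtain ⟨F₁, hF₁, h₁⟩ := ihV hx.1
    obtain ⟨F₂, hF₂, h₂⟩ := ihW hx.2
    refine ⟨F₁ ∪ F₂, by simpa using ⟨hF₁, hF₂⟩, fun A hA => ⟨h₁ ⟨?_, hA.2⟩, h₂ ⟨?_, hA.2⟩⟩⟩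
    · exact (Finset.coe_subset.2 Finset.subset_union_left).trans hA.1
    · exact (Finset.coe_subset.2 Finset.subset_union_right).trans hA.1
  | sUnion S _ ih =>
    obtain ⟨V, hVS, hxV⟩ := hx
    obtain ⟨F, hF, h⟩ := ih V hVS hxV
    exact ⟨F, hF, h.trans (Set.subset_sUnion_of_mem hVS)⟩

lemma hasBasis_nhds_XTop (x : ↥𝒳) :
    (@nhds _ (XTop 𝒳) x).HasBasis (fun F : Finset ℕ => ↑F ⊆ (x : Set ℕ))
      (fun F => {A : ↥𝒳 | ↑F ⊆ (A : Set ℕ) ∧ (A : Set ℕ) ⊆ x}) := by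
  let := XTop 𝒳
  refine ⟨fun U => ⟨fun hU => ?_, fun ⟨F, hF, hFU⟩ => mem_of_superset ?_ hFU⟩⟩
  · obtain ⟨V, hVU, hV, hxV⟩ := mem_nhds_iff.1 hU
    obtain ⟨F, hF, hFV⟩ := exists_finset_subset_of_generateOpen 𝒳 hV hxV
    exact ⟨F, hF, hFV.trans hVU⟩
  · exact IsOpen.mem_nhds (TopologicalSpace.GenerateOpen.basic _ ⟨x, x.2, F, rfl⟩)
      ⟨hF, subset_rfl⟩

lemma mem_derivSet_univ_iff (x : ↥𝒳) :
    x ∈ derivSet 𝒳 Set.univ ↔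
      ∀ F : Finset ℕ, ↑F ⊆ (x : Set ℕ) → ∃ A ∈ 𝒳, A ≠ x ∧ ↑F ⊆ A ∧ A ⊆ x := by
  let := XTop 𝒳
  simp only [derivSet, Set.mem_ofPred_eq, accPt_iff_frequently, Set.mem_univ, and_true,
    (hasBasis_nhds_XTop 𝒳 x).frequently_iff]
  refine forall₂_congr fun F _ => ⟨?_, ?_⟩
  · rintro ⟨A, hA, hne⟩
    exact ⟨A, A.2, fun h => hne (Subtype.ext h), hA⟩
  · rintro ⟨A, hA𝒳, hne, hA⟩
    exact ⟨⟨A, hA𝒳⟩, hA, fun h => hne (congrArg Subtype.val h)⟩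

end Topology

/-- A language `L'` in the collection is a limit point of the whole collection in
the topology `XTop` if and only if there is an infinite perfect tower of pairwise
distinct languages from the collection with terminal language `L'`. -/
theorem stmt13 (L : ℕ → Set ℕ) (hinf : ∀ i, (L i).Infinite)
    (L' : Set ℕ) (hL' : L' ∈ Set.range L) :
    (⟨L', hL'⟩ : ↥(Set.range L)) ∈ derivSet (Set.range L) Set.univ ↔
      ∃ Λ : ℕ → Set ℕ, (∀ j, Λ j ∈ Set.range L) ∧ IsPerfectTower Λ L' := by
  rw [mem_derivSet_univ_iff]
  constructor
  · exact exists_perfectTower_of_forall_finset (by rintro _ ⟨i, rfl⟩; exact hinf i)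
  · rintro ⟨Λ, hΛ, hT⟩ F hF
    obtain ⟨j, hj⟩ := hT.exists_finset_subset hF
    exact ⟨Λ j, hΛ j, (hT.proper j).ne, hj, (hT.proper j).subset⟩
end
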